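/- arXiv:2003.13200 — 6 statements merged into one kernel-verified Lean document; each statement's English description precedes it below -/
import Mathlib

section
/- For n ≥ 16 divisible by 5, there exists a rainbow P_4-saturated graph on n vertices with exactly 4n/5 edges, namely the disjoint union of n/5 copies of the star K_{1,4}. -/
open SimpleGraph

/-- A proper edge coloring: edges sharing a vertex get distinct colors. -/
def IsProperEdgeColoring {V : Type*} {α : Type*} (G : SimpleGraph V) (c : Sym2 V → α) : Prop :=
  ∀ e ∈ G.edgeSet, ∀ f ∈ G.edgeSet, e ≠ f → (∃ x, x ∈ e ∧ x ∈ f) → c e ≠ c f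

/-- A rainbow copy of `H` in `G` under the coloring `c`: an injective homomorphism whose
edge images receive pairwise distinct colors. -/
def HasRainbowCopy {W V : Type*} {α : Type*} (H : SimpleGraph W) (G : SimpleGraph V)
    (c : Sym2 V → α) : Prop :=
  ∃ f : H →g G, Function.Injective f ∧
    ∀ e ∈ H.edgeSet, ∀ e' ∈ H.edgeSet, e ≠ e' → c (Sym2.map f e) ≠ c (Sym2.map f e')

/-- The graph `G` with the extra edge `xy`. -/
def addEdge {V : Type*} (G : SimpleGraph V) (x y : V) : SimpleGraph V :=
  G ⊔ SimpleGraph.fromEdgeSet {s(x, y)}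

/-- `G` is rainbow `H`-saturated. -/
def RainbowSaturated {V W : Type*} (G : SimpleGraph V) (H : SimpleGraph W) : Prop :=
  (∃ c : Sym2 V → ℕ, IsProperEdgeColoring G c ∧ ¬ HasRainbowCopy H G c) ∧
  ∀ x y : V, x ≠ y → ¬ G.Adj x y →
    ∀ c : Sym2 V → ℕ, IsProperEdgeColoring (addEdge G x y) c →
      HasRainbowCopy H (addEdge G x y) c

/-- The rainbow saturation number: the least number of edges of an `n`-vertex
rainbow `H`-saturated graph. -/
noncomputable def rainbowSatNum {W : Type*} (n : ℕ) (H : SimpleGraph W) : ℕ :=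
  sInf {m | ∃ G : SimpleGraph (Fin n), RainbowSaturated G H ∧ G.edgeSet.ncard = m}

/-! ### Auxiliary definitions and lemmas -/

/-- The disjoint union of stars `K_{1,4}`: blocks of `5` consecutive vertices,
with the `0 mod 5` vertex of each block as the center. -/
abbrev starG (n : ℕ) : SimpleGraph (Fin n) :=
  SimpleGraph.fromRel fun u v : Fin n =>
    (u : ℕ) / 5 = (v : ℕ) / 5 ∧ ((u : ℕ) % 5 = 0 ∨ (v : ℕ) % 5 = 0)

lemma starG_adj {n : ℕ} {u v : Fin n} :
    (starG n).Adj u v ↔ u ≠ v ∧ (u : ℕ) / 5 = (v : ℕ) / 5 ∧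
      ((u : ℕ) % 5 = 0 ∨ (v : ℕ) % 5 = 0) := by
  rw [SimpleGraph.fromRel_adj]
  constructor
  · rintro ⟨hne, h | h⟩
    · exact ⟨hne, h.1, h.2⟩
    · exact ⟨hne, h.1.symm, h.2.symm⟩
  · rintro ⟨hne, h1, h2⟩
    exact ⟨hne, Or.inl ⟨h1, h2⟩⟩

lemma center_eq {n : ℕ} {u v : Fin n} (hu : (u : ℕ) % 5 = 0) (hv : (v : ℕ) % 5 = 0)
    (h : (u : ℕ) / 5 = (v : ℕ) / 5) : u = v := by
  have := Nat.div_add_mod (u : ℕ) 5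
  have := Nat.div_add_mod (v : ℕ) 5
  exact Fin.ext (by omega)

lemma no_inj_hom {n : ℕ} (f : pathGraph 4 →g starG n) : ¬ Function.Injective f := by
  intro hinj
  have a01 : (starG n).Adj (f 0) (f 1) := f.map_rel (by rw [pathGraph_adj]; left; rfl)
  have a12 : (starG n).Adj (f 1) (f 2) := f.map_rel (by rw [pathGraph_adj]; left; rfl)
  have a23 : (starG n).Adj (f 2) (f 3) := f.map_rel (by rw [pathGraph_adj]; left; rfl)
  rw [starG_adj] at a01 a12 a23
  obtain ⟨n01, b01, c01⟩ := a01
  obtain ⟨n12, b12, c12⟩ := a12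
  obtain ⟨n23, b23, c23⟩ := a23
  rcases c12 with h1 | h2
  · rcases c23 with h2 | h3
    · exact n12 (center_eq h1 h2 b12)
    · exact (by decide : (1 : Fin 4) ≠ 3) (hinj (center_eq h1 h3 (by omega)))
  · rcases c01 with h0 | h1
    · exact (by decide : (0 : Fin 4) ≠ 2) (hinj (center_eq h0 h2 (by omega)))
    · exact n12 (center_eq h1 h2 b12)

lemma addEdge_adj_of_adj {V : Type*} {G : SimpleGraph V} {x y u v : V} (h : G.Adj u v) :
    (addEdge G x y).Adj u v := Or.inl h

lemma addEdge_adj_self {V : Type*} {G : SimpleGraph V} {x y : V} (hxy : x ≠ y) :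
    (addEdge G x y).Adj x y :=
  Or.inr ((SimpleGraph.fromEdgeSet_adj _).mpr ⟨rfl, hxy⟩)

lemma addEdge_comm {V : Type*} (G : SimpleGraph V) (x y : V) :
    addEdge G x y = addEdge G y x := by
  rw [addEdge, addEdge, show s(x, y) = s(y, x) from Sym2.eq_swap]

lemma key_indices (a b : ℕ) : ∃ i ∈ ({1,2,3,4} : Finset ℕ), ∃ j ∈ ({1,2,3,4} : Finset ℕ),
    i ≠ j ∧ i ≠ a ∧ i ≠ b ∧ j ≠ a ∧ j ≠ b := by
  have h2 : 1 < (({1,2,3,4} : Finset ℕ) \ {a,b}).card := by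
    have h1 : (({a,b} : Finset ℕ)).card ≤ 2 :=
      (Finset.card_insert_le a {b}).trans (by simp)
    have h3 := Finset.le_card_sdiff ({a,b} : Finset ℕ) {1,2,3,4}
    have h4 : (({1,2,3,4} : Finset ℕ)).card = 4 := by decide
    omega
  obtain ⟨i, hi, j, hj, hij⟩ := Finset.one_lt_card.mp h2
  rw [Finset.mem_sdiff] at hi hj
  have hi2 := hi.2
  have hj2 := hj.2
  simp only [Finset.mem_insert, Finset.mem_singleton, not_or] at hi2 hj2
  exact ⟨i, hi.1, j, hj.1, hij, hi2.1, hi2.2, hj2.1, hj2.2⟩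

lemma pathGraph4_edges (e : Sym2 (Fin 4)) (he : e ∈ (pathGraph 4).edgeSet) :
    e = s(0,1) ∨ e = s(1,2) ∨ e = s(2,3) := by
  induction e using Sym2.ind with
  | _ a b =>
    rw [mem_edgeSet, pathGraph_adj] at he
    fin_cases a <;> fin_cases b <;> simp_all

lemma rainbow_of_path {V : Type*} (G : SimpleGraph V) (c : Sym2 V → ℕ)
    (v0 v1 v2 v3 : V)
    (h01 : G.Adj v0 v1) (h12 : G.Adj v1 v2) (h23 : G.Adj v2 v3)
    (d02 : v0 ≠ v2) (d03 : v0 ≠ v3) (d13 : v1 ≠ v3)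
    (hc1 : c s(v0,v1) ≠ c s(v1,v2)) (hc2 : c s(v0,v1) ≠ c s(v2,v3))
    (hc3 : c s(v1,v2) ≠ c s(v2,v3)) :
    HasRainbowCopy (pathGraph 4) G c := by
  have hinj : Function.Injective ![v0,v1,v2,v3] := by
    intro a b hab
    fin_cases a <;> fin_cases b <;> simp_all <;>
      first
        | rfl
        | exact absurd hab h01.ne | exact absurd hab h01.ne'
        | exact absurd hab h12.ne | exact absurd hab h12.ne'
        | exact absurd hab h23.ne | exact absurd hab h23.ne'
        | exact absurd hab d02 | exact absurd hab.symm d02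
        | exact absurd hab d03 | exact absurd hab.symm d03
        | exact absurd hab d13 | exact absurd hab.symm d13
  refine ⟨⟨![v0,v1,v2,v3], ?_⟩, hinj, ?_⟩
  · intro a b hab
    rw [pathGraph_adj] at hab
    fin_cases a <;> fin_cases b <;> simp_all <;>
      first
        | exact h01 | exact h12 | exact h23
        | exact h01.symm | exact h12.symm | exact h23.symm
  · intro e he e' he' hne
    rcases pathGraph4_edges e he with rfl | rfl | rfl <;>
      rcases pathGraph4_edges e' he' with rfl | rfl | rfl <;>
        simp_all [Sym2.map_pair_eq] <;>
        first
          | exact hc1 | exact hc2 | exact hc3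
          | exact Ne.symm hc1 | exact Ne.symm hc2 | exact Ne.symm hc3

lemma sat_leaf {n : ℕ} (h5 : 5 ∣ n) (x y : Fin n) (hxy : x ≠ y)
    (hnadj : ¬(starG n).Adj x y) (hx : (x : ℕ) % 5 ≠ 0)
    (c : Sym2 (Fin n) → ℕ) (hc : IsProperEdgeColoring (addEdge (starG n) x y) c) :
    HasRainbowCopy (pathGraph 4) (addEdge (starG n) x y) c := by
  obtain ⟨k, hk⟩ := h5
  have hxlt : (x : ℕ) < n := x.is_lt
  have hblt : 5 * ((x : ℕ) / 5) + 5 ≤ n := by omega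
  set b := (x : ℕ) / 5 with hb
  set G' := addEdge (starG n) x y with hG'
  let z : Fin n := ⟨5 * b, by omega⟩
  have hzv : (z : ℕ) = 5 * b := rfl
  have hzx : z ≠ x := Fin.ne_of_val_ne (by rw [hzv]; omega)
  have hzxadj : (starG n).Adj z x := starG_adj.mpr ⟨hzx, by rw [hzv]; omega,
    Or.inl (by rw [hzv]; omega)⟩
  have hzy : z ≠ y := fun h => hnadj (h ▸ hzxadj.symm)
  obtain ⟨i, hi, j, hj, hij, hix, hiy, hjx, hjy⟩ := key_indices ((x : ℕ) % 5) ((y : ℕ) % 5)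
  have hi5 : 1 ≤ i ∧ i < 5 := by
    simp only [Finset.mem_insert, Finset.mem_singleton] at hi; omega
  have hj5 : 1 ≤ j ∧ j < 5 := by
    simp only [Finset.mem_insert, Finset.mem_singleton] at hj; omega
  let l1 : Fin n := ⟨5 * b + i, by omega⟩
  let l2 : Fin n := ⟨5 * b + j, by omega⟩
  have hl1v : (l1 : ℕ) = 5 * b + i := rfl
  have hl2v : (l2 : ℕ) = 5 * b + j := rfl
  have hyv := Nat.div_add_mod (y : ℕ) 5
  have mkadj : ∀ l : Fin n, (l : ℕ) = 5*b+i ∨ (l : ℕ) = 5*b+j → (starG n).Adj z l := by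
    intro l hl
    refine starG_adj.mpr ⟨Fin.ne_of_val_ne (by rw [hzv]; omega), by rw [hzv]; omega,
      Or.inl (by rw [hzv]; omega)⟩
  have props : ∀ l : Fin n, (l : ℕ) = 5*b+i ∨ (l : ℕ) = 5*b+j →
      l ≠ x ∧ l ≠ y ∧ l ≠ z := by
    intro l hl
    refine ⟨Fin.ne_of_val_ne (by omega), Fin.ne_of_val_ne (by omega),
      Fin.ne_of_val_ne (by rw [hzv]; omega)⟩
  have hmem : ∀ {u v : Fin n}, G'.Adj u v → s(u,v) ∈ G'.edgeSet := fun {u v} h => (G'.mem_edgeSet).mpr h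
  have hd : c s(l1, z) ≠ c s(l2, z) := by
    refine hc _ (hmem (addEdge_adj_of_adj (mkadj l1 (Or.inl rfl)).symm))
      _ (hmem (addEdge_adj_of_adj (mkadj l2 (Or.inr rfl)).symm)) ?_
      ⟨z, Sym2.mem_mk_right _ _, Sym2.mem_mk_right _ _⟩
    intro h
    rw [Sym2.eq_iff] at h
    have h1 := (props l1 (Or.inl rfl)).2.2
    have h2 := (props l2 (Or.inr rfl)).2.2
    have : l1 ≠ l2 := Fin.ne_of_val_ne (by omega)
    tauto
  obtain ⟨l, hlzadj, hlx, hly, hlz, hlcol⟩ :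
      ∃ l, (starG n).Adj z l ∧ l ≠ x ∧ l ≠ y ∧ l ≠ z ∧ c s(l, z) ≠ c s(x, y) := by
    by_cases hcc : c s(l1, z) = c s(x, y)
    · obtain ⟨h1, h2, h3⟩ := props l2 (Or.inr rfl)
      exact ⟨l2, mkadj l2 (Or.inr rfl), h1, h2, h3, fun h => hd (hcc.trans h.symm)⟩
    · obtain ⟨h1, h2, h3⟩ := props l1 (Or.inl rfl)
      exact ⟨l1, mkadj l1 (Or.inl rfl), h1, h2, h3, hcc⟩
  refine rainbow_of_path G' c l z x y (addEdge_adj_of_adj hlzadj.symm)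
    (addEdge_adj_of_adj hzxadj) (addEdge_adj_self hxy) hlx hly hzy ?_ hlcol ?_
  · refine hc _ (hmem (addEdge_adj_of_adj hlzadj.symm))
      _ (hmem (addEdge_adj_of_adj hzxadj)) ?_ ⟨z, Sym2.mem_mk_right _ _, Sym2.mem_mk_left _ _⟩
    intro h
    rw [Sym2.eq_iff] at h
    tauto
  · refine hc _ (hmem (addEdge_adj_of_adj hzxadj))
      _ (hmem (addEdge_adj_self hxy)) ?_ ⟨x, Sym2.mem_mk_right _ _, Sym2.mem_mk_left _ _⟩
    intro h
    rw [Sym2.eq_iff] at h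
    have := hzx
    tauto

lemma sat_center {n : ℕ} (h5 : 5 ∣ n) (x y : Fin n) (hxy : x ≠ y)
    (hx : (x : ℕ) % 5 = 0) (hy : (y : ℕ) % 5 = 0)
    (c : Sym2 (Fin n) → ℕ) (hc : IsProperEdgeColoring (addEdge (starG n) x y) c) :
    HasRainbowCopy (pathGraph 4) (addEdge (starG n) x y) c := by
  obtain ⟨k, hk⟩ := h5
  have hxlt : (x : ℕ) < n := x.is_lt
  have hylt : (y : ℕ) < n := y.is_lt
  have hxblt : 5 * ((x : ℕ) / 5) + 5 ≤ n := by omega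
  have hyblt : 5 * ((y : ℕ) / 5) + 5 ≤ n := by omega
  have hxyv : (x : ℕ) ≠ (y : ℕ) := fun h => hxy (Fin.ext h)
  set G' := addEdge (starG n) x y with hG'
  have hmem : ∀ {u v : Fin n}, G'.Adj u v → s(u,v) ∈ G'.edgeSet := fun {u v} h => (G'.mem_edgeSet).mpr h
  let w : Fin n := ⟨(y : ℕ) + 1, by omega⟩
  let l1 : Fin n := ⟨(x : ℕ) + 1, by omega⟩
  let l2 : Fin n := ⟨(x : ℕ) + 2, by omega⟩
  have hwv : (w : ℕ) = (y : ℕ) + 1 := rfl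
  have hl1v : (l1 : ℕ) = (x : ℕ) + 1 := rfl
  have hl2v : (l2 : ℕ) = (x : ℕ) + 2 := rfl
  have hyw : (starG n).Adj y w := starG_adj.mpr ⟨Fin.ne_of_val_ne (by omega),
    by rw [hwv]; omega, Or.inl hy⟩
  have hxl1 : (starG n).Adj x l1 := starG_adj.mpr ⟨Fin.ne_of_val_ne (by omega),
    by rw [hl1v]; omega, Or.inl hx⟩
  have hxl2 : (starG n).Adj x l2 := starG_adj.mpr ⟨Fin.ne_of_val_ne (by omega),
    by rw [hl2v]; omega, Or.inl hx⟩
  have hblocks : (x : ℕ) / 5 ≠ (y : ℕ) / 5 := by omega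
  have hwx : w ≠ x := Fin.ne_of_val_ne (by omega)
  have hl1y : l1 ≠ y := Fin.ne_of_val_ne (by omega)
  have hl2y : l2 ≠ y := Fin.ne_of_val_ne (by omega)
  have hl1w : l1 ≠ w := Fin.ne_of_val_ne (by omega)
  have hl2w : l2 ≠ w := Fin.ne_of_val_ne (by omega)
  have hl1x : l1 ≠ x := hxl1.ne'
  have hl2x : l2 ≠ x := hxl2.ne'
  have hd : c s(l1, x) ≠ c s(l2, x) := by
    refine hc _ (hmem (addEdge_adj_of_adj hxl1.symm)) _ (hmem (addEdge_adj_of_adj hxl2.symm))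
      ?_ ⟨x, Sym2.mem_mk_right _ _, Sym2.mem_mk_right _ _⟩
    intro h
    rw [Sym2.eq_iff] at h
    have : l1 ≠ l2 := Fin.ne_of_val_ne (by omega)
    tauto
  obtain ⟨l, hxladj, hly, hlw, hlx, hlcol⟩ :
      ∃ l, (starG n).Adj x l ∧ l ≠ y ∧ l ≠ w ∧ l ≠ x ∧ c s(l, x) ≠ c s(y, w) := by
    by_cases hcc : c s(l1, x) = c s(y, w)
    · exact ⟨l2, hxl2, hl2y, hl2w, hl2x, fun h => hd (hcc.trans h.symm)⟩
    · exact ⟨l1, hxl1, hl1y, hl1w, hl1x, hcc⟩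
  refine rainbow_of_path G' c l x y w (addEdge_adj_of_adj hxladj.symm)
    (addEdge_adj_self hxy) (addEdge_adj_of_adj hyw) hly hlw hwx.symm ?_ hlcol ?_
  · refine hc _ (hmem (addEdge_adj_of_adj hxladj.symm)) _ (hmem (addEdge_adj_self hxy)) ?_
      ⟨x, Sym2.mem_mk_right _ _, Sym2.mem_mk_left _ _⟩
    intro h
    rw [Sym2.eq_iff] at h
    tauto
  · refine hc _ (hmem (addEdge_adj_self hxy)) _ (hmem (addEdge_adj_of_adj hyw)) ?_
      ⟨y, Sym2.mem_mk_right _ _, Sym2.mem_mk_left _ _⟩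
    intro h
    rw [Sym2.eq_iff] at h
    have := hwx
    tauto

lemma starG_count {n : ℕ} (h5 : 5 ∣ n) : (starG n).edgeSet.ncard = 4 * n / 5 := by
  obtain ⟨k, rfl⟩ := h5
  let e : Fin k × Fin 4 → Sym2 (Fin (5*k)) := fun p =>
    s((⟨5*p.1, by have := p.1.is_lt; omega⟩ : Fin (5*k)),
      (⟨5*p.1+p.2+1, by have := p.1.is_lt; have := p.2.is_lt; omega⟩ : Fin (5*k)))
  have hmem2 : ∀ p : Fin k × Fin 4, e p ∈ (starG (5*k)).edgeSet := by
    rintro ⟨b, i⟩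
    have hb := b.is_lt
    have hi := i.is_lt
    show s(_, _) ∈ _
    rw [SimpleGraph.mem_edgeSet, starG_adj]
    refine ⟨Fin.ne_of_val_ne (show 5*(b:ℕ) ≠ 5*(b:ℕ)+(i:ℕ)+1 by omega),
      show (5*(b:ℕ))/5 = (5*(b:ℕ)+(i:ℕ)+1)/5 by omega,
      Or.inl (show (5*(b:ℕ))%5 = 0 by omega)⟩
  have hrange : (starG (5*k)).edgeSet = Set.range e := by
    refine Set.eq_of_subset_of_subset ?_ ?_
    · intro eo
      induction eo using Sym2.ind with
      | _ u v =>
        intro heo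
        rw [SimpleGraph.mem_edgeSet, starG_adj] at heo
        obtain ⟨hne, hdiv, hmod⟩ := heo
        have hnev : (u : ℕ) ≠ v := fun h => hne (Fin.ext h)
        have hu := u.is_lt
        have hv := v.is_lt
        rcases hmod with h0 | h0
        · refine ⟨(⟨(u:ℕ)/5, by omega⟩, ⟨(v:ℕ)%5 - 1, by omega⟩), ?_⟩
          show s((⟨_,_⟩ : Fin (5*k)), (⟨_,_⟩ : Fin (5*k))) = s(u, v)
          rw [Sym2.eq_iff]
          exact Or.inl ⟨Fin.ext (show 5*((u:ℕ)/5) = (u:ℕ) by omega),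
            Fin.ext (show 5*((u:ℕ)/5)+((v:ℕ)%5-1)+1 = (v:ℕ) by omega)⟩
        · refine ⟨(⟨(v:ℕ)/5, by omega⟩, ⟨(u:ℕ)%5 - 1, by omega⟩), ?_⟩
          show s((⟨_,_⟩ : Fin (5*k)), (⟨_,_⟩ : Fin (5*k))) = s(u, v)
          rw [Sym2.eq_iff]
          exact Or.inr ⟨Fin.ext (show 5*((v:ℕ)/5) = (v:ℕ) by omega),
            Fin.ext (show 5*((v:ℕ)/5)+((u:ℕ)%5-1)+1 = (u:ℕ) by omega)⟩
    · rintro _ ⟨p, rfl⟩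
      exact hmem2 p
  have hinj : Function.Injective e := by
    rintro ⟨b, i⟩ ⟨b', i'⟩ h
    have hi := i.is_lt
    have hi' := i'.is_lt
    simp [e, Sym2.eq_iff, Fin.mk.injEq] at h
    rcases h with ⟨h1, h2⟩ | ⟨h1, h2⟩ <;>
      exact Prod.ext (Fin.ext (show (b:ℕ) = (b':ℕ) by omega))
        (Fin.ext (show (i:ℕ) = (i':ℕ) by omega))
  rw [hrange, ← Set.image_univ, Set.ncard_image_of_injective _ hinj, Set.ncard_univ]
  simp only [Nat.card_eq_fintype_card, Fintype.card_prod, Fintype.card_fin]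
  omega

theorem stmt7 (n : ℕ) (hn : 16 ≤ n) (h5 : 5 ∣ n) :
    RainbowSaturated
      (SimpleGraph.fromRel fun u v : Fin n =>
        (u : ℕ) / 5 = (v : ℕ) / 5 ∧ ((u : ℕ) % 5 = 0 ∨ (v : ℕ) % 5 = 0))
      (pathGraph 4) ∧
    (SimpleGraph.fromRel fun u v : Fin n =>
        (u : ℕ) / 5 = (v : ℕ) / 5 ∧ ((u : ℕ) % 5 = 0 ∨ (v : ℕ) % 5 = 0)).edgeSet.ncard
      = 4 * n / 5 := by
  refine ⟨⟨?_, ?_⟩, starG_count h5⟩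
  · classical
    refine ⟨fun e => (Fintype.equivFin (Sym2 (Fin n)) e : ℕ), ?_, ?_⟩
    · intro e _ f _ hne _ h
      exact hne ((Fintype.equivFin (Sym2 (Fin n))).injective (Fin.ext h))
    · rintro ⟨f, hfinj, -⟩
      exact no_inj_hom f hfinj
  · intro x y hxy hnadj c hc
    by_cases hx : (x : ℕ) % 5 = 0
    · by_cases hy : (y : ℕ) % 5 = 0
      · exact sat_center h5 x y hxy hx hy c hc
      · rw [addEdge_comm (starG n) x y] at hc ⊢
        exact sat_leaf h5 y x hxy.symm (fun h => hnadj h.symm) hy c hc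
    · exact sat_leaf h5 x y hxy hnadj hx c hc
end

section
/- For n ≥ 16, every rainbow P_4-saturated graph on n vertices has at least (4/5)n − 4 edges; consequently sat*(n,P_4) ≥ (4/5)n − 4. -/
open SimpleGraph

namespace Stmt9Aux


lemma pg4_adj_iff (a b : Fin 4) : (pathGraph 4).Adj a b ↔
    (a = 0 ∧ b = 1) ∨ (a = 1 ∧ b = 0) ∨ (a = 1 ∧ b = 2) ∨ (a = 2 ∧ b = 1) ∨
    (a = 2 ∧ b = 3) ∨ (a = 3 ∧ b = 2) := by
  rw [pathGraph_adj]
  fin_cases a <;> fin_cases b <;> simp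

lemma pg4_edge_iff (e : Sym2 (Fin 4)) : e ∈ (pathGraph 4).edgeSet ↔
    e = s(0,1) ∨ e = s(1,2) ∨ e = s(2,3) := by
  induction e using Sym2.ind with
  | _ a b =>
    rw [SimpleGraph.mem_edgeSet, pg4_adj_iff]
    simp [Sym2.eq_iff]
    tauto

def mu (a b : Fin 4) : ℕ := a.val ^^^ b.val

lemma mu_comm : ∀ a b, mu a b = mu b a := by decide

lemma mu_proper : ∀ A B A' B' : Fin 4, A ≠ B ∧ A' ≠ B' ∧ ¬(A = A' ∧ B = B') ∧
    ¬(A = B' ∧ B = A') ∧ (A = A' ∨ A = B' ∨ B = A' ∨ B = B') → mu A B ≠ mu A' B' := by decide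

lemma mu_eq : ∀ A B C D : Fin 4, A ≠ B ∧ A ≠ C ∧ A ≠ D ∧ B ≠ C ∧ B ≠ D ∧ C ≠ D →
    mu A B = mu C D := by decide

lemma addEdge_adj {V : Type*} (G : SimpleGraph V) (x y u v : V) :
    (addEdge G x y).Adj u v ↔ G.Adj u v ∨ (s(u,v) = s(x,y) ∧ u ≠ v) := by
  simp [addEdge, SimpleGraph.fromEdgeSet_adj]


-- standalone: each component yields at least (card - 1) edges of the graph inside it
lemma comp_lower {n : ℕ} (G : SimpleGraph (Fin n)) [Fintype G.edgeSet]
    [DecidableEq G.ConnectedComponent]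
    (K : G.ConnectedComponent)
    (fC : Sym2 (Fin n) → G.ConnectedComponent)
    (hfC : ∀ a b : Fin n, G.Adj a b → fC s(a,b) = G.connectedComponentMk a) :
    (Finset.univ.filter (fun v => G.connectedComponentMk v = K)).card ≤
      (G.edgeFinset.filter (fun e => fC e = K)).card + 1 := by
  classical
  obtain ⟨r, hr⟩ : ∃ v, G.connectedComponentMk v = K := K.exists_rep
  have hstep : ∀ v, G.connectedComponentMk v = K → v ≠ r →
      ∃ w, G.Adj v w ∧ G.dist w r < G.dist v r := by
    intro v hv hvr
    have hreach : G.Reachable v r := ConnectedComponent.exact (hv.trans hr.symm)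
    have hpos : 0 < G.dist v r := hreach.pos_dist_of_ne hvr
    obtain ⟨p, hp⟩ := hreach.exists_walk_length_eq_dist
    cases p with
    | nil => simp at hp; omega
    | cons hadj q =>
      refine ⟨_, hadj, ?_⟩
      have := SimpleGraph.dist_le q
      rw [SimpleGraph.Walk.length_cons] at hp
      omega
  choose N hN1 hN2 using hstep
  -- the injection
  have hinj : Set.InjOn (fun v => if h : G.connectedComponentMk v = K ∧ v ≠ r
        then s(v, N v h.1 h.2) else s(v,v))
      ((Finset.univ.filter (fun v => G.connectedComponentMk v = K)).erase r) := by
    intro u hu v hv huv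
    simp only [Finset.coe_erase, Set.mem_diff, Finset.coe_filter, Set.mem_setOf_eq,
      Set.mem_singleton_iff] at hu hv
    have hu2 : G.connectedComponentMk u = K ∧ u ≠ r := ⟨hu.1.2, hu.2⟩
    have hv2 : G.connectedComponentMk v = K ∧ v ≠ r := ⟨hv.1.2, hv.2⟩
    simp only [dif_pos hu2, dif_pos hv2, Sym2.eq_iff] at huv
    rcases huv with ⟨h1, _⟩ | ⟨h1, h2⟩
    · exact h1
    · exfalso
      have d1 := hN2 u hu2.1 hu2.2
      have d2 := hN2 v hv2.1 hv2.2
      rw [← h1] at d2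
      rw [h2] at d1
      omega
  have hmaps : ∀ v ∈ ((Finset.univ.filter (fun v => G.connectedComponentMk v = K)).erase r),
      (if h : G.connectedComponentMk v = K ∧ v ≠ r then s(v, N v h.1 h.2) else s(v,v)) ∈
        (G.edgeFinset.filter (fun e => fC e = K)) := by
    intro v hv
    simp only [Finset.mem_erase, Finset.mem_filter, Finset.mem_univ, true_and] at hv
    have hv2 : G.connectedComponentMk v = K ∧ v ≠ r := ⟨hv.2, hv.1⟩
    rw [dif_pos hv2]
    rw [Finset.mem_filter, SimpleGraph.mem_edgeFinset, SimpleGraph.mem_edgeSet]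
    exact ⟨hN1 v hv2.1 hv2.2, by rw [hfC _ _ (hN1 v hv2.1 hv2.2), hv2.1]⟩
  have hcard := Finset.card_le_card_of_injOn _ hmaps hinj
  have hrmem : r ∈ (Finset.univ.filter (fun v => G.connectedComponentMk v = K)) := by
    simp [hr]
  rw [Finset.card_erase_of_mem hrmem] at hcard
  omega

lemma keyLemma {n : ℕ} (G : SimpleGraph (Fin n))
    (hsat : RainbowSaturated G (pathGraph 4))
    (x y : Fin n) (hxy : x ≠ y) (hna : ¬ G.Adj x y)
    (hT : ((G.connectedComponentMk x).supp ∪ (G.connectedComponentMk y).supp).ncard ≤ 4) :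
    False := by
  classical
  obtain ⟨c0, hc0p, hc0r⟩ := hsat.1
  set T : Set (Fin n) :=
    (G.connectedComponentMk x).supp ∪ (G.connectedComponentMk y).supp with hTdef
  have hxT : x ∈ T := Or.inl rfl
  have hyT : y ∈ T := Or.inr rfl
  have hmkT : ∀ u v : Fin n, G.Adj u v → u ∈ T → v ∈ T := by
    intro u v hadj hu
    have h2 : G.connectedComponentMk v = G.connectedComponentMk u :=
      (ConnectedComponent.connectedComponentMk_eq_of_adj hadj).symm
    rcases hu with hu | hu
    · rw [ConnectedComponent.mem_supp_iff] at hu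
      exact Or.inl (by rw [ConnectedComponent.mem_supp_iff, h2, hu])
    · rw [ConnectedComponent.mem_supp_iff] at hu
      exact Or.inr (by rw [ConnectedComponent.mem_supp_iff, h2, hu])
  have hcl : ∀ u v : Fin n, u ∈ T → (addEdge G x y).Adj u v → v ∈ T := by
    intro u v hu hadj
    rw [addEdge_adj] at hadj
    rcases hadj with hadj | ⟨hs, hne⟩
    · exact hmkT u v hadj hu
    · rw [Sym2.eq_iff] at hs
      rcases hs with ⟨_, rfl⟩ | ⟨_, rfl⟩
      · exact hyT
      · exact hxT
  have hedge : ∀ u v : Fin n, (addEdge G x y).Adj u v → (u ∈ T ↔ v ∈ T) :=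
    fun u v hadj => ⟨fun h => hcl u v h hadj, fun h => hcl v u h hadj.symm⟩
  have hTfin : T.Finite := Set.toFinite _
  haveI : Fintype T := hTfin.fintype
  have hcard : Fintype.card T ≤ 4 := by
    have h1 := Set.ncard_eq_toFinset_card' T
    rw [Set.toFinset_card] at h1
    omega
  obtain ⟨emb⟩ : Nonempty (T ↪ Fin 4) := by
    apply Function.Embedding.nonempty_of_card_le
    simpa using hcard
  set g : Fin n → Fin 4 := fun v => if h : v ∈ T then emb ⟨v, h⟩ else 0 with hgdef
  have hginj : ∀ u ∈ T, ∀ v ∈ T, g u = g v → u = v := by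
    intro u hu v hv h
    simp only [hgdef, dif_pos hu, dif_pos hv] at h
    have := emb.injective h
    exact congrArg Subtype.val this
  set c' : Sym2 (Fin n) → ℕ := Sym2.lift ⟨fun u v =>
      if u ∈ T ∧ v ∈ T then mu (g u) (g v) else c0 s(u, v),
    by intro u v
       dsimp only
       by_cases h : u ∈ T ∧ v ∈ T
       · rw [if_pos h, if_pos (And.intro h.2 h.1), mu_comm]
       · rw [if_neg h, if_neg (fun h' => h ⟨h'.2, h'.1⟩), Sym2.eq_swap]⟩ with hc'def
  have hc'in : ∀ u v : Fin n, u ∈ T → v ∈ T → c' s(u,v) = mu (g u) (g v) := by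
    intro u v hu hv
    simp only [hc'def, Sym2.lift_mk]
    rw [if_pos (And.intro hu hv)]
  have hc'out : ∀ u v : Fin n, u ∉ T → c' s(u,v) = c0 s(u,v) := by
    intro u v hu
    simp only [hc'def, Sym2.lift_mk]
    rw [if_neg (fun h' => hu h'.1)]
  -- properness
  have hprop : IsProperEdgeColoring (addEdge G x y) c' := by
    intro e he f hf hef hw
    induction e using Sym2.ind with
    | _ a b =>
    induction f using Sym2.ind with
    | _ a' b' =>
    rw [SimpleGraph.mem_edgeSet] at he hf
    have hab : a ≠ b := he.ne
    have ha'b' : a' ≠ b' := hf.ne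
    obtain ⟨w, hwe, hwf⟩ := hw
    rw [Sym2.mem_iff] at hwe hwf
    have hvert : a = a' ∨ a = b' ∨ b = a' ∨ b = b' := by
      rcases hwe with rfl | rfl <;> rcases hwf with h | h <;> tauto
    by_cases haT : a ∈ T
    · have hbT : b ∈ T := (hedge a b he).mp haT
      have ha'T : a' ∈ T ∧ b' ∈ T := by
        rcases hvert with h | h | h | h
        · have : a' ∈ T := h ▸ haT
          exact ⟨this, (hedge a' b' hf).mp this⟩
        · have : b' ∈ T := h ▸ haT
          exact ⟨(hedge a' b' hf).mpr this, this⟩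
        · have : a' ∈ T := h ▸ hbT
          exact ⟨this, (hedge a' b' hf).mp this⟩
        · have : b' ∈ T := h ▸ hbT
          exact ⟨(hedge a' b' hf).mpr this, this⟩
      rw [hc'in a b haT hbT, hc'in a' b' ha'T.1 ha'T.2]
      apply mu_proper
      refine ⟨?_, ?_, ?_, ?_, ?_⟩
      · exact fun h => hab (hginj a haT b hbT h)
      · exact fun h => ha'b' (hginj a' ha'T.1 b' ha'T.2 h)
      · rintro ⟨h1, h2⟩
        exact hef (by rw [hginj a haT a' ha'T.1 h1, hginj b hbT b' ha'T.2 h2])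
      · rintro ⟨h1, h2⟩
        apply hef
        rw [hginj a haT b' ha'T.2 h1, hginj b hbT a' ha'T.1 h2, Sym2.eq_swap]
      · rcases hvert with h | h | h | h
        · exact Or.inl (congrArg g h)
        · exact Or.inr (Or.inl (congrArg g h))
        · exact Or.inr (Or.inr (Or.inl (congrArg g h)))
        · exact Or.inr (Or.inr (Or.inr (congrArg g h)))
    · have hbT : b ∉ T := fun h => haT ((hedge a b he).mpr h)
      have ha'T : a' ∉ T := by
        rcases hvert with h | h | h | h
        · exact h ▸ haT
        · exact fun hh => (h ▸ haT) ((hedge a' b' hf).mp hh)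
        · exact h ▸ hbT
        · exact fun hh => (h ▸ hbT) ((hedge a' b' hf).mp hh)
      have hb'T : b' ∉ T := fun h => ha'T ((hedge a' b' hf).mpr h)
      have heG : G.Adj a b := by
        rcases (addEdge_adj G x y a b).mp he with h | ⟨hs, _⟩
        · exact h
        · exfalso
          rw [Sym2.eq_iff] at hs
          rcases hs with ⟨rfl, _⟩ | ⟨rfl, _⟩
          · exact haT hxT
          · exact haT hyT
      have hfG : G.Adj a' b' := by
        rcases (addEdge_adj G x y a' b').mp hf with h | ⟨hs, _⟩
        · exact h
        · exfalso
          rw [Sym2.eq_iff] at hs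
          rcases hs with ⟨rfl, _⟩ | ⟨rfl, _⟩
          · exact ha'T hxT
          · exact ha'T hyT
      rw [hc'out a b haT, hc'out a' b' ha'T]
      apply hc0p _ heG _ hfG hef
      rcases hvert with h | h | h | h
      · exact ⟨a, Sym2.mem_mk_left a b, h ▸ Sym2.mem_mk_left a' b'⟩
      · exact ⟨a, Sym2.mem_mk_left a b, h ▸ Sym2.mem_mk_right a' b'⟩
      · exact ⟨b, Sym2.mem_mk_right a b, h ▸ Sym2.mem_mk_left a' b'⟩
      · exact ⟨b, Sym2.mem_mk_right a b, h ▸ Sym2.mem_mk_right a' b'⟩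
  -- no rainbow copy
  have hnr : ¬ HasRainbowCopy (pathGraph 4) (addEdge G x y) c' := by
    rintro ⟨f, finj, fcol⟩
    have h01 : (addEdge G x y).Adj (f 0) (f 1) := f.map_adj (by rw [pg4_adj_iff]; tauto)
    have h12 : (addEdge G x y).Adj (f 1) (f 2) := f.map_adj (by rw [pg4_adj_iff]; tauto)
    have h23 : (addEdge G x y).Adj (f 2) (f 3) := f.map_adj (by rw [pg4_adj_iff]; tauto)
    have e01 : s((0:Fin 4),(1:Fin 4)) ∈ (pathGraph 4).edgeSet := by rw [pg4_edge_iff]; tauto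
    have e23 : s((2:Fin 4),(3:Fin 4)) ∈ (pathGraph 4).edgeSet := by rw [pg4_edge_iff]; tauto
    by_cases h0T : f 0 ∈ T
    · have h1T : f 1 ∈ T := (hedge _ _ h01).mp h0T
      have h2T : f 2 ∈ T := (hedge _ _ h12).mp h1T
      have h3T : f 3 ∈ T := (hedge _ _ h23).mp h2T
      have hfne : ∀ i j : Fin 4, i ≠ j → f i ≠ f j := fun i j hij => fun h => hij (finj h)
      have key : mu (g (f 0)) (g (f 1)) = mu (g (f 2)) (g (f 3)) := by
        apply mu_eq
        refine ⟨?_, ?_, ?_, ?_, ?_, ?_⟩ <;>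
          [ exact fun h => hfne 0 1 (by decide) (hginj _ h0T _ h1T h);
            exact fun h => hfne 0 2 (by decide) (hginj _ h0T _ h2T h);
            exact fun h => hfne 0 3 (by decide) (hginj _ h0T _ h3T h);
            exact fun h => hfne 1 2 (by decide) (hginj _ h1T _ h2T h);
            exact fun h => hfne 1 3 (by decide) (hginj _ h1T _ h3T h);
            exact fun h => hfne 2 3 (by decide) (hginj _ h2T _ h3T h)]
      have hcol := fcol s(0,1) e01 s(2,3) e23 (by decide)
      apply hcol
      rw [Sym2.map_pair_eq, Sym2.map_pair_eq, hc'in _ _ h0T h1T, hc'in _ _ h2T h3T]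
      exact key
    · have h1T : f 1 ∉ T := fun h => h0T ((hedge _ _ h01).mpr h)
      have h2T : f 2 ∉ T := fun h => h1T ((hedge _ _ h12).mpr h)
      have h3T : f 3 ∉ T := fun h => h2T ((hedge _ _ h23).mpr h)
      have hiT : ∀ i : Fin 4, f i ∉ T := by
        intro i
        fin_cases i <;> assumption
      have hG : ∀ u v : Fin n, (addEdge G x y).Adj u v → u ∉ T → G.Adj u v := by
        intro u v hadj hu
        rcases (addEdge_adj G x y u v).mp hadj with h | ⟨hs, _⟩
        · exact h
        · exfalso
          rw [Sym2.eq_iff] at hs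
          rcases hs with ⟨rfl, _⟩ | ⟨rfl, _⟩
          · exact hu hxT
          · exact hu hyT
      have hmap : ∀ {a b : Fin 4}, (pathGraph 4).Adj a b → G.Adj (f a) (f b) := by
        intro a b hab
        rw [pg4_adj_iff] at hab
        rcases hab with ⟨rfl,rfl⟩|⟨rfl,rfl⟩|⟨rfl,rfl⟩|⟨rfl,rfl⟩|⟨rfl,rfl⟩|⟨rfl,rfl⟩
        · exact hG _ _ h01 (hiT 0)
        · exact (hG _ _ h01 (hiT 0)).symm
        · exact hG _ _ h12 (hiT 1)
        · exact (hG _ _ h12 (hiT 1)).symm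
        · exact hG _ _ h23 (hiT 2)
        · exact (hG _ _ h23 (hiT 2)).symm
      apply hc0r
      refine ⟨⟨f, hmap⟩, finj, ?_⟩
      intro e he e' he' hee
      have htrans : ∀ e ∈ (pathGraph 4).edgeSet, c0 (Sym2.map f e) = c' (Sym2.map f e) := by
        intro e he
        rw [pg4_edge_iff] at he
        rcases he with rfl | rfl | rfl <;>
          rw [Sym2.map_pair_eq] <;> exact (hc'out _ _ (hiT _)).symm
      show c0 (Sym2.map f e) ≠ c0 (Sym2.map f e')
      rw [htrans e he, htrans e' he']
      exact fcol e he e' he' hee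
  exact hnr (hsat.2 x y hxy hna c' hprop)


lemma countLemma {n : ℕ} (G : SimpleGraph (Fin n))
    (hkey : ∀ x y : Fin n, x ≠ y → ¬ G.Adj x y →
      ((G.connectedComponentMk x).supp ∪ (G.connectedComponentMk y).supp).ncard ≤ 4 → False) :
    4 * n ≤ 5 * G.edgeSet.ncard + 4 := by
  classical
  haveI : Fintype G.edgeSet := (Set.toFinite _).fintype
  haveI : Fintype G.ConnectedComponent := Fintype.ofFinite _
  set fC : Sym2 (Fin n) → G.ConnectedComponent := fun e => G.connectedComponentMk e.out.1
    with hfC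
  have hfCadj : ∀ a b : Fin n, G.Adj a b → fC s(a,b) = G.connectedComponentMk a := by
    intro a b hadj
    have hm : (s(a,b)).out.1 ∈ s(a,b) := Sym2.out_fst_mem _
    rw [Sym2.mem_iff] at hm
    rcases hm with h | h
    · show G.connectedComponentMk (s(a,b)).out.1 = G.connectedComponentMk a
      rw [h]
    · show G.connectedComponentMk (s(a,b)).out.1 = G.connectedComponentMk a
      rw [h]
      exact (ConnectedComponent.connectedComponentMk_eq_of_adj hadj).symm
  set vS : G.ConnectedComponent → Finset (Fin n) :=
    fun K => Finset.univ.filter (fun v => G.connectedComponentMk v = K) with hvS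
  set eS : G.ConnectedComponent → Finset (Sym2 (Fin n)) :=
    fun K => G.edgeFinset.filter (fun e => fC e = K) with heS
  have hmem_vS : ∀ K v, v ∈ vS K ↔ G.connectedComponentMk v = K := by
    intro K v; simp [hvS]
  have hsupp : ∀ K : G.ConnectedComponent, (K.supp).ncard = (vS K).card := by
    intro K
    have h1 : K.supp = ↑(vS K) := by
      ext v
      simp [hvS, ConnectedComponent.mem_supp_iff]
    rw [h1, Set.ncard_coe_finset]
  have hclq : ∀ K, (vS K).card ≤ 4 → ∀ a ∈ vS K, ∀ b ∈ vS K, a ≠ b → G.Adj a b := by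
    intro K hK a ha b hb hab
    by_contra hna
    apply hkey a b hab hna
    rw [hmem_vS] at ha hb
    rw [ha, hb, Set.union_self, hsupp]
    exact hK
  have hedge_mem : ∀ K a b, G.Adj a b → G.connectedComponentMk a = K → s(a,b) ∈ eS K := by
    intro K a b hadj ha
    simp only [heS, Finset.mem_filter, mem_edgeFinset, mem_edgeSet]
    exact ⟨hadj, by rw [hfCadj a b hadj, ha]⟩
  have hsmall : ∀ K1 K2 : G.ConnectedComponent, K1 ≠ K2 → (vS K1).card ≤ 2 →
      (vS K2).card ≤ 2 → False := by
    intro K1 K2 hne h1 h2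
    obtain ⟨a, ha⟩ := K1.exists_rep
    obtain ⟨b, hb⟩ := K2.exists_rep
    have ha' : G.connectedComponentMk a = K1 := ha
    have hb' : G.connectedComponentMk b = K2 := hb
    have hab : a ≠ b := by
      rintro rfl
      exact hne (ha'.symm.trans hb')
    have hna : ¬ G.Adj a b := by
      intro hadj
      exact hne (ha'.symm.trans
        ((ConnectedComponent.connectedComponentMk_eq_of_adj hadj).trans hb'))
    apply hkey a b hab hna
    calc ((G.connectedComponentMk a).supp ∪ (G.connectedComponentMk b).supp).ncard
        ≤ (G.connectedComponentMk a).supp.ncard + (G.connectedComponentMk b).supp.ncard :=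
          Set.ncard_union_le _ _
      _ ≤ 4 := by rw [ha', hb', hsupp, hsupp]; omega
  -- per-component inequality
  have hperK : ∀ K, 4 * (vS K).card ≤ 5 * (eS K).card +
      (if (vS K).card ≤ 2 then 4 else 0) := by
    intro K
    by_cases h2 : (vS K).card ≤ 2
    · rw [if_pos h2]
      by_cases h1 : (vS K).card ≤ 1
      · omega
      · have hc : (vS K).card = 2 := by omega
        obtain ⟨a, b, hab, hs⟩ := Finset.card_eq_two.mp hc
        have ha : a ∈ vS K := by rw [hs]; simp
        have hb : b ∈ vS K := by rw [hs]; simp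
        have hadj := hclq K (by omega) a ha b hb hab
        have hmem := hedge_mem K a b hadj ((hmem_vS K a).mp ha)
        have hpos : 1 ≤ (eS K).card := Finset.card_pos.mpr ⟨_, hmem⟩
        omega
    · rw [if_neg h2]
      by_cases h4 : (vS K).card ≤ 4
      · have hcl := hclq K h4
        by_cases h3 : (vS K).card ≤ 3
        · -- card = 3
          have hc : (vS K).card = 3 := by omega
          obtain ⟨a, b, c, hab, hac, hbc, hs⟩ := Finset.card_eq_three.mp hc
          have ha : a ∈ vS K := by rw [hs]; simp
          have hb : b ∈ vS K := by rw [hs]; simp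
          have hc' : c ∈ vS K := by rw [hs]; simp
          have hsub : ({s(a,b), s(a,c), s(b,c)} : Finset (Sym2 (Fin n))) ⊆ eS K := by
            intro e he
            simp only [Finset.mem_insert, Finset.mem_singleton] at he
            rcases he with rfl | rfl | rfl
            · exact hedge_mem K a b (hcl a ha b hb hab) ((hmem_vS K a).mp ha)
            · exact hedge_mem K a c (hcl a ha c hc' hac) ((hmem_vS K a).mp ha)
            · exact hedge_mem K b c (hcl b hb c hc' hbc) ((hmem_vS K b).mp hb)
          have hcard3 : ({s(a,b), s(a,c), s(b,c)} : Finset (Sym2 (Fin n))).card = 3 := by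
            rw [Finset.card_insert_of_notMem, Finset.card_insert_of_notMem,
              Finset.card_singleton]
            · simp only [Finset.mem_singleton, Sym2.eq_iff]
              tauto
            · simp only [Finset.mem_insert, Finset.mem_singleton, Sym2.eq_iff]
              tauto
          have hle := Finset.card_le_card hsub
          omega
        · -- card = 4
          have hc : (vS K).card = 4 := by omega
          have hpos : 0 < (vS K).card := by omega
          obtain ⟨a, ha⟩ := Finset.card_pos.mp hpos
          have hc3 : ((vS K).erase a).card = 3 := by
            rw [Finset.card_erase_of_mem ha, hc]
          obtain ⟨b, c, d, hbc, hbd, hcd, hs⟩ := Finset.card_eq_three.mp hc3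
          have hb : b ∈ (vS K).erase a := by rw [hs]; simp
          have hc' : c ∈ (vS K).erase a := by rw [hs]; simp
          have hd : d ∈ (vS K).erase a := by rw [hs]; simp
          have hab : a ≠ b := (Finset.ne_of_mem_erase hb).symm
          have hac : a ≠ c := (Finset.ne_of_mem_erase hc').symm
          have had : a ≠ d := (Finset.ne_of_mem_erase hd).symm
          have hb' : b ∈ vS K := Finset.mem_of_mem_erase hb
          have hc'' : c ∈ vS K := Finset.mem_of_mem_erase hc'
          have hd' : d ∈ vS K := Finset.mem_of_mem_erase hd
          have hsub : ({s(a,b), s(a,c), s(a,d), s(b,c)} : Finset (Sym2 (Fin n))) ⊆ eS K := by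
            intro e he
            simp only [Finset.mem_insert, Finset.mem_singleton] at he
            rcases he with rfl | rfl | rfl | rfl
            · exact hedge_mem K a b (hcl a ha b hb' hab) ((hmem_vS K a).mp ha)
            · exact hedge_mem K a c (hcl a ha c hc'' hac) ((hmem_vS K a).mp ha)
            · exact hedge_mem K a d (hcl a ha d hd' had) ((hmem_vS K a).mp ha)
            · exact hedge_mem K b c (hcl b hb' c hc'' hbc) ((hmem_vS K b).mp hb')
          have hcard4 : ({s(a,b), s(a,c), s(a,d), s(b,c)} : Finset (Sym2 (Fin n))).card = 4 := by
            rw [Finset.card_insert_of_notMem, Finset.card_insert_of_notMem,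
              Finset.card_insert_of_notMem, Finset.card_singleton]
            · simp only [Finset.mem_singleton, Sym2.eq_iff]
              tauto
            · simp only [Finset.mem_insert, Finset.mem_singleton, Sym2.eq_iff]
              tauto
            · simp only [Finset.mem_insert, Finset.mem_singleton, Sym2.eq_iff]
              tauto
          have hle := Finset.card_le_card hsub
          omega
      · -- card ≥ 5
        have h5 : (vS K).card ≤ (eS K).card + 1 := comp_lower G K fC hfCadj
        omega
  -- summing up
  have hvsum : ∑ K, (vS K).card = n := by
    have h1 := Finset.card_eq_sum_card_fiberwise
      (f := fun v => G.connectedComponentMk v) (s := Finset.univ) (t := Finset.univ)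
      (fun x _ => Finset.mem_univ _)
    simp only [Finset.card_univ, Fintype.card_fin] at h1
    exact h1.symm
  have hesum : ∑ K, (eS K).card = G.edgeSet.ncard := by
    have h1 := Finset.card_eq_sum_card_fiberwise
      (f := fC) (s := G.edgeFinset) (t := Finset.univ)
      (fun x _ => Finset.mem_univ _)
    rw [Set.ncard_eq_toFinset_card']
    have h2 : G.edgeSet.toFinset = G.edgeFinset := rfl
    rw [h2, h1]
  have hsum := Finset.sum_le_sum (fun K (_ : K ∈ Finset.univ) => hperK K)
  have hite : ∑ K : G.ConnectedComponent, (if (vS K).card ≤ 2 then 4 else 0) ≤ 4 := by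
    rw [← Finset.sum_filter]
    have hone : (Finset.univ.filter (fun K : G.ConnectedComponent => (vS K).card ≤ 2)).card ≤ 1 := by
      rw [Finset.card_le_one]
      intro K1 h1 K2 h2
      simp only [Finset.mem_filter] at h1 h2
      by_contra hne
      exact hsmall K1 K2 hne h1.2 h2.2
    calc (∑ _K ∈ Finset.univ.filter (fun K : G.ConnectedComponent => (vS K).card ≤ 2), 4)
        = 4 * (Finset.univ.filter (fun K : G.ConnectedComponent => (vS K).card ≤ 2)).card := by
          rw [Finset.sum_const, smul_eq_mul, Nat.mul_comm]
      _ ≤ 4 := by omega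
  have hmul : ∑ K, 4 * (vS K).card = 4 * n := by
    rw [← Finset.mul_sum, hvsum]
  have hmul2 : ∑ K, 5 * (eS K).card = 5 * G.edgeSet.ncard := by
    rw [← Finset.mul_sum, hesum]
  have h5 : ∑ K, (5 * (eS K).card + (if (vS K).card ≤ 2 then 4 else 0))
      = 5 * G.edgeSet.ncard + ∑ K : G.ConnectedComponent, (if (vS K).card ≤ 2 then 4 else 0) := by
    rw [Finset.sum_add_distrib, hmul2]
  rw [hmul, h5] at hsum
  omega

lemma star_saturated {n : ℕ} (hn : 16 ≤ n) :
    ∃ G : SimpleGraph (Fin n), RainbowSaturated G (pathGraph 4) := by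
  classical
  set z : Fin n := ⟨0, by omega⟩ with hz
  set G : SimpleGraph (Fin n) := SimpleGraph.fromRel (fun u v => u = z ∨ v = z) with hG
  have hadj : ∀ u v : Fin n, G.Adj u v ↔ u ≠ v ∧ (u = z ∨ v = z) := by
    intro u v
    rw [hG, SimpleGraph.fromRel_adj]
    tauto
  refine ⟨G, ?_, ?_⟩
  · -- a proper rainbow-free coloring
    refine ⟨Sym2.lift ⟨fun u v => u.val + v.val, fun u v => Nat.add_comm _ _⟩, ?_, ?_⟩
    · intro e he f hf hef _
      induction e using Sym2.ind with
      | _ a b =>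
      induction f using Sym2.ind with
      | _ a' b' =>
      rw [SimpleGraph.mem_edgeSet, hadj] at he hf
      -- normalize : each star edge is s(z, p) with p ≠ z
      obtain ⟨p, hp, hpz⟩ : ∃ p, s(a,b) = s(z,p) ∧ p ≠ z := by
        rcases he.2 with rfl | rfl
        · exact ⟨b, rfl, fun h => he.1 h.symm⟩
        · exact ⟨a, Sym2.eq_swap, fun h => he.1 h⟩
      obtain ⟨q, hq, hqz⟩ : ∃ q, s(a',b') = s(z,q) ∧ q ≠ z := by
        rcases hf.2 with rfl | rfl
        · exact ⟨b', rfl, fun h => hf.1 h.symm⟩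
        · exact ⟨a', Sym2.eq_swap, fun h => hf.1 h⟩
      rw [hp, hq]
      simp only [Sym2.lift_mk]
      have hpq : p ≠ q := by
        intro h
        exact hef (by rw [hp, hq, h])
      intro hcontra
      exact hpq (Fin.val_injective (by omega : p.val = q.val))
    · rintro ⟨f, finj, fcol⟩
      have h01 : G.Adj (f 0) (f 1) := f.map_adj (by rw [pg4_adj_iff]; tauto)
      have h12 : G.Adj (f 1) (f 2) := f.map_adj (by rw [pg4_adj_iff]; tauto)
      have h23 : G.Adj (f 2) (f 3) := f.map_adj (by rw [pg4_adj_iff]; tauto)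
      rw [hadj] at h01 h12 h23
      rcases h12.2 with h | h
      · rcases h23.2 with h' | h'
        · exact h12.1 (h.trans h'.symm)
        · exact absurd (finj (h.trans h'.symm : f 1 = f 3)) (by decide)
      · rcases h01.2 with h' | h'
        · exact absurd (finj (h'.trans h.symm : f 0 = f 2)) (by decide)
        · exact h12.1 (h'.trans h.symm)
  · -- saturation
    intro u v huv hnadj c hc
    have huz : u ≠ z := by
      intro h
      exact hnadj ((hadj u v).mpr ⟨huv, Or.inl h⟩)
    have hvz : v ≠ z := by
      intro h
      exact hnadj ((hadj u v).mpr ⟨huv, Or.inr h⟩)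
    -- two spare leaves
    have hcard : 1 < (Finset.univ \ ({z, u, v} : Finset (Fin n))).card := by
      have h1 : ({z, u, v} : Finset (Fin n)).card ≤ 3 := by
        apply le_trans (Finset.card_insert_le _ _)
        apply Nat.succ_le_succ
        apply le_trans (Finset.card_insert_le _ _)
        simp
      have h2 := Finset.le_card_sdiff ({z, u, v} : Finset (Fin n)) Finset.univ
      simp only [Finset.card_univ, Fintype.card_fin] at h2
      omega
    obtain ⟨x1, hx1, x2, hx2, hx12⟩ := Finset.one_lt_card.mp hcard
    simp only [Finset.mem_sdiff, Finset.mem_univ, true_and, Finset.mem_insert,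
      Finset.mem_singleton, not_or] at hx1 hx2
    set G' : SimpleGraph (Fin n) := addEdge G u v with hG'
    have hauv : G'.Adj u v := by
      rw [hG', addEdge_adj]
      exact Or.inr ⟨rfl, huv⟩
    have havz : G'.Adj v z := by
      rw [hG', addEdge_adj]
      exact Or.inl ((hadj v z).mpr ⟨hvz, Or.inr rfl⟩)
    have hazx1 : G'.Adj z x1 := by
      rw [hG', addEdge_adj]
      exact Or.inl ((hadj z x1).mpr ⟨fun h => hx1.1 h.symm, Or.inl rfl⟩)
    have hazx2 : G'.Adj z x2 := by
      rw [hG', addEdge_adj]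
      exact Or.inl ((hadj z x2).mpr ⟨fun h => hx2.1 h.symm, Or.inl rfl⟩)
    -- proper coloring facts
    have hC12 : c s(u,v) ≠ c s(v,z) := by
      apply hc _ hauv _ havz
      · intro h
        rw [Sym2.eq_iff] at h
        rcases h with ⟨h1, _⟩ | ⟨h1, _⟩
        · exact huv h1
        · exact huz h1
      · exact ⟨v, Sym2.mem_mk_right u v, Sym2.mem_mk_left v z⟩
    have hC2x : ∀ x, G'.Adj z x → v ≠ x → c s(v,z) ≠ c s(z,x) := by
      intro x hx hvx
      apply hc _ havz _ hx
      · intro h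
        rw [Sym2.eq_iff] at h
        rcases h with ⟨h1, _⟩ | ⟨h1, _⟩
        · exact hvz h1
        · exact hvx h1
      · exact ⟨z, Sym2.mem_mk_right v z, Sym2.mem_mk_left z x⟩
    have hC33 : c s(z,x1) ≠ c s(z,x2) := by
      apply hc _ hazx1 _ hazx2
      · intro h
        rw [Sym2.eq_iff] at h
        rcases h with ⟨_, h2⟩ | ⟨h1, _⟩
        · exact hx12 h2
        · exact hx2.1 h1.symm
      · exact ⟨z, Sym2.mem_mk_left z x1, Sym2.mem_mk_left z x2⟩
    -- choose the spare leaf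
    obtain ⟨x, hxz, hxu, hxv, hazx, hC13, hC23⟩ :
        ∃ x, x ≠ z ∧ x ≠ u ∧ x ≠ v ∧ G'.Adj z x ∧
          c s(u,v) ≠ c s(z,x) ∧ c s(v,z) ≠ c s(z,x) := by
      by_cases hcc : c s(z,x1) = c s(u,v)
      · exact ⟨x2, fun h => hx2.1 h, fun h => hx2.2.1 h, fun h => hx2.2.2 h, hazx2,
          fun h => hC33 (hcc.trans h), hC2x x2 hazx2 (fun h => hx2.2.2 h.symm)⟩
      · exact ⟨x1, fun h => hx1.1 h, fun h => hx1.2.1 h, fun h => hx1.2.2 h, hazx1,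
          fun h => hcc h.symm, hC2x x1 hazx1 (fun h => hx1.2.2 h.symm)⟩
    -- the rainbow P4 : u - v - z - x
    set φ : Fin 4 → Fin n := fun i => if i = 0 then u else if i = 1 then v else
      if i = 2 then z else x with hφ
    have hφ0 : φ 0 = u := rfl
    have hφ1 : φ 1 = v := rfl
    have hφ2 : φ 2 = z := rfl
    have hφ3 : φ 3 = x := rfl
    have hmap : ∀ {a b : Fin 4}, (pathGraph 4).Adj a b → G'.Adj (φ a) (φ b) := by
      intro a b hab
      rw [pg4_adj_iff] at hab
      rcases hab with ⟨rfl,rfl⟩|⟨rfl,rfl⟩|⟨rfl,rfl⟩|⟨rfl,rfl⟩|⟨rfl,rfl⟩|⟨rfl,rfl⟩ <;>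
        simp only [hφ0, hφ1, hφ2, hφ3]
      · exact hauv
      · exact hauv.symm
      · exact havz
      · exact havz.symm
      · exact hazx
      · exact hazx.symm
    have hinj : Function.Injective φ := by
      intro a b hab
      fin_cases a <;> fin_cases b <;>
        simp only [hφ0, hφ1, hφ2, hφ3] at hab ⊢ <;>
        first
          | rfl
          | (exfalso; first
              | exact huv hab | exact huv hab.symm
              | exact huz hab | exact huz hab.symm
              | exact hvz hab | exact hvz hab.symm
              | exact hxu hab | exact hxu hab.symm
              | exact hxv hab | exact hxv hab.symm
              | exact hxz hab | exact hxz hab.symm)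
    refine ⟨⟨φ, hmap⟩, hinj, ?_⟩
    show ∀ e ∈ (pathGraph 4).edgeSet, ∀ e' ∈ (pathGraph 4).edgeSet, e ≠ e' →
      c (Sym2.map φ e) ≠ c (Sym2.map φ e')
    intro e he e' he' hee
    rw [pg4_edge_iff] at he he'
    have hm01 : Sym2.map φ s((0:Fin 4),(1:Fin 4)) = s(u,v) := by
      rw [Sym2.map_pair_eq, hφ0, hφ1]
    have hm12 : Sym2.map φ s((1:Fin 4),(2:Fin 4)) = s(v,z) := by
      rw [Sym2.map_pair_eq, hφ1, hφ2]
    have hm23 : Sym2.map φ s((2:Fin 4),(3:Fin 4)) = s(z,x) := by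
      rw [Sym2.map_pair_eq, hφ2, hφ3]
    rcases he with rfl | rfl | rfl <;> rcases he' with rfl | rfl | rfl
    · exact absurd rfl hee
    · rw [hm01, hm12]; exact hC12
    · rw [hm01, hm23]; exact hC13
    · rw [hm01, hm12]; exact hC12.symm
    · exact absurd rfl hee
    · rw [hm12, hm23]; exact hC23
    · rw [hm01, hm23]; exact hC13.symm
    · rw [hm12, hm23]; exact hC23.symm
    · exact absurd rfl hee


end Stmt9Aux

theorem stmt9 (n : ℕ) (hn : 16 ≤ n) :
    (∀ G : SimpleGraph (Fin n), RainbowSaturated G (pathGraph 4) →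
      4 / 5 * (n : ℝ) - 4 ≤ (G.edgeSet.ncard : ℝ)) ∧
    4 / 5 * (n : ℝ) - 4 ≤ (rainbowSatNum n (pathGraph 4) : ℝ) := by
  have main : ∀ G : SimpleGraph (Fin n), RainbowSaturated G (pathGraph 4) →
      4 / 5 * (n : ℝ) - 4 ≤ (G.edgeSet.ncard : ℝ) := by
    intro G hG
    have h := Stmt9Aux.countLemma G (fun x y hxy hna hT => Stmt9Aux.keyLemma G hG x y hxy hna hT)
    have h2 : (4 * n : ℝ) ≤ 5 * (G.edgeSet.ncard : ℝ) + 4 := by exact_mod_cast h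
    linarith
  refine ⟨main, ?_⟩
  obtain ⟨G0, hG0⟩ := Stmt9Aux.star_saturated hn
  have hne : {m | ∃ G : SimpleGraph (Fin n),
      RainbowSaturated G (pathGraph 4) ∧ G.edgeSet.ncard = m}.Nonempty :=
    ⟨G0.edgeSet.ncard, G0, hG0, rfl⟩
  obtain ⟨G1, hG1, hcard⟩ := Nat.sInf_mem hne
  have : rainbowSatNum n (pathGraph 4) = G1.edgeSet.ncard := by
    rw [rainbowSatNum, hcard]
  rw [this]
  exact main G1 hG1
end

section
/- The wheel graph W_n (n ≥ 6) on vertices {w, v_1, ..., v_{n-1}}, consisting of the cycle v_1...v_{n-1} plus the hub w adjacent to all cycle vertices, admits a proper edge coloring with colors {1,...,n-1} given by c(w v_i) = i and c(v_{i+1} v_{i+2}) = i (indices mod n-1), and this coloring contains no rainbow 4-cycle. -/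
open SimpleGraph

/-- The wheel with `m` rim vertices: hub `none` joined to every rim vertex `some i`,
plus the rim cycle `some i — some (i+1)` (indices mod `m`). -/
def wheel (m : ℕ) : SimpleGraph (Option (ZMod m)) :=
  SimpleGraph.fromRel fun x y =>
    (x = none ∧ y ≠ none) ∨ (∃ i : ZMod m, x = some i ∧ y = some (i + 1))

/-! ### Auxiliary definitions and lemmas for `stmt10` -/

/-- The coloring function on ordered pairs of wheel vertices. -/
def wheelColorFun (m : ℕ) : Option (ZMod m) → Option (ZMod m) → ZMod m
  | none, none => 0
  | none, some i => i
  | some i, none => i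
  | some a, some b => (if b = a + 1 then a - 1 else 0) + (if a = b + 1 then b - 1 else 0)

lemma wheelColorFun_symm (m : ℕ) (x y : Option (ZMod m)) :
    wheelColorFun m x y = wheelColorFun m y x := by
  rcases x with _ | a <;> rcases y with _ | b
  · rfl
  · rfl
  · rfl
  · exact add_comm _ _

/-- The coloring of the wheel as a function on unordered pairs. -/
def wheelColor (m : ℕ) : Sym2 (Option (ZMod m)) → ZMod m :=
  Sym2.lift ⟨wheelColorFun m, wheelColorFun_symm m⟩

@[simp] lemma wheelColor_spoke (m : ℕ) (i : ZMod m) :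
    wheelColor m s(none, some i) = i := rfl

lemma wheelColor_rim {m : ℕ} (h2 : (2 : ZMod m) ≠ 0) (a : ZMod m) :
    wheelColor m s(some a, some (a + 1)) = a - 1 := by
  show (if a + 1 = a + 1 then a - 1 else 0) + (if a = (a + 1) + 1 then (a + 1) - 1 else 0) = a - 1
  rw [if_pos rfl, if_neg, add_zero]
  intro h
  exact h2 (by linear_combination -h)

lemma wheel_adj_some {m : ℕ} {a b : ZMod m} (h : (wheel m).Adj (some a) (some b)) :
    b = a + 1 ∨ a = b + 1 := by
  rw [wheel, SimpleGraph.fromRel_adj] at h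
  rcases h with ⟨-, (⟨h, -⟩ | ⟨i, hi, hj⟩) | (⟨h, -⟩ | ⟨i, hi, hj⟩)⟩
  · exact absurd h (by simp)
  · left
    simp only [Option.some.injEq] at hi hj
    rw [hj, hi]
  · exact absurd h (by simp)
  · right
    simp only [Option.some.injEq] at hi hj
    rw [hj, hi]

lemma wheel_edge {m : ℕ} {e : Sym2 (Option (ZMod m))} (he : e ∈ (wheel m).edgeSet) :
    (∃ i : ZMod m, e = s(none, some i)) ∨ ∃ i : ZMod m, e = s(some i, some (i + 1)) := by
  induction e using Sym2.inductionOn with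
  | hf x y =>
    rw [SimpleGraph.mem_edgeSet, wheel, SimpleGraph.fromRel_adj] at he
    obtain ⟨hne, h | h⟩ := he
    · rcases h with ⟨hx, hy⟩ | ⟨i, hx, hy⟩
      · subst hx
        obtain ⟨j, rfl⟩ := Option.ne_none_iff_exists'.mp hy
        exact Or.inl ⟨j, rfl⟩
      · subst hx; subst hy
        exact Or.inr ⟨i, rfl⟩
    · rcases h with ⟨hy, hx⟩ | ⟨i, hy, hx⟩
      · subst hy
        obtain ⟨j, rfl⟩ := Option.ne_none_iff_exists'.mp hx
        exact Or.inl ⟨j, Sym2.eq_swap⟩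
      · subst hy; subst hx
        exact Or.inr ⟨i, Sym2.eq_swap⟩

/-- No 4-cycle lies entirely on the rim when `m ≥ 5`. -/
lemma no_rim_C4 {m : ℕ} (h2 : (2 : ZMod m) ≠ 0) (h4 : (4 : ZMod m) ≠ 0)
    {a0 a1 a2 a3 : ZMod m}
    (R1 : a1 = a0 + 1 ∨ a0 = a1 + 1) (R2 : a2 = a1 + 1 ∨ a1 = a2 + 1)
    (R3 : a3 = a2 + 1 ∨ a2 = a3 + 1) (R4 : a0 = a3 + 1 ∨ a3 = a0 + 1)
    (h02 : a0 ≠ a2) (h13 : a1 ≠ a3) : False := by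
  rcases R1 with h1 | h1 <;> rcases R2 with hb | hb <;> rcases R3 with hc | hc <;>
      rcases R4 with hd | hd <;>
    first
    | exact h02 (by linear_combination hb - h1)
    | exact h02 (by linear_combination h1 - hb)
    | exact h13 (by linear_combination hc - hb)
    | exact h13 (by linear_combination hb - hc)
    | exact h4 (by linear_combination -h1 - hb - hc - hd)
    | exact h2 (by linear_combination hd - h1 - hb - hc)

/-- Key lemma: in any 4-cycle through the hub, two edge colors coincide. -/
lemma wheel_aux {m : ℕ} (h2 : (2 : ZMod m) ≠ 0) {p q r : ZMod m}
    (hpq : q = p + 1 ∨ p = q + 1) (hqr : r = q + 1 ∨ q = r + 1) (hpr : p ≠ r) :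
    wheelColor m s(none, some p) = wheelColor m s(some q, some r) ∨
    wheelColor m s(some p, some q) = wheelColor m s(some r, none) := by
  rcases hpq with rfl | rfl
  · rcases hqr with rfl | hqr
    · left
      rw [wheelColor_spoke, wheelColor_rim h2]
      ring
    · exact absurd (by linear_combination hqr) hpr
  · rcases hqr with hqr | rfl
    · exact absurd (by linear_combination -hqr) hpr
    · right
      rw [show s(some (r + 1 + 1), some (r + 1)) = s(some (r + 1), some (r + 1 + 1)) from
            Sym2.eq_swap,
          wheelColor_rim h2,
          show s(some r, (none : Option (ZMod m))) = s(none, some r) from Sym2.eq_swap,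
          wheelColor_spoke]
      ring

theorem stmt10 (n : ℕ) (hn : 6 ≤ n) :
    ∃ c : Sym2 (Option (ZMod (n - 1))) → ZMod (n - 1),
      (∀ i : ZMod (n - 1), c s(none, some i) = i) ∧
      (∀ i : ZMod (n - 1), c s(some (i + 1), some (i + 2)) = i) ∧
      IsProperEdgeColoring (wheel (n - 1)) c ∧
      ¬ HasRainbowCopy (cycleGraph 4) (wheel (n - 1)) c := by
  have hcast : ∀ k : ℕ, 0 < k → k < 5 → ((k : ℕ) : ZMod (n - 1)) ≠ 0 := by
    intro k hk1 hk2 h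
    rw [ZMod.natCast_eq_zero_iff] at h
    have := Nat.le_of_dvd hk1 h
    omega
  have h1ne : (1 : ZMod (n - 1)) ≠ 0 := by
    have := hcast 1 (by norm_num) (by norm_num); simpa using this
  have h2ne : (2 : ZMod (n - 1)) ≠ 0 := by
    have := hcast 2 (by norm_num) (by norm_num); simpa using this
  have h4ne : (4 : ZMod (n - 1)) ≠ 0 := by
    have := hcast 4 (by norm_num) (by norm_num); simpa using this
  refine ⟨wheelColor (n - 1), fun i => rfl, ?_, ?_, ?_⟩
  · intro i
    have e : (i : ZMod (n - 1)) + 2 = (i + 1) + 1 := by ring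
    rw [e, wheelColor_rim h2ne]
    ring
  · -- properness
    intro e he f hf hef hx
    rcases wheel_edge he with ⟨i, rfl⟩ | ⟨a, rfl⟩ <;>
      rcases wheel_edge hf with ⟨j, rfl⟩ | ⟨b, rfl⟩
    · rw [wheelColor_spoke, wheelColor_spoke]
      intro h
      exact hef (by rw [h])
    · rw [wheelColor_spoke, wheelColor_rim h2ne]
      obtain ⟨x, hx1, hx2⟩ := hx
      rw [Sym2.mem_iff] at hx1 hx2
      rcases hx1 with rfl | rfl
      · rcases hx2 with h | h <;> exact absurd h (by simp)
      · rcases hx2 with h | h <;> rw [Option.some_inj] at h <;> subst h <;> intro hc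
        · exact h1ne (by linear_combination hc)
        · exact h2ne (by linear_combination hc)
    · rw [wheelColor_spoke, wheelColor_rim h2ne]
      obtain ⟨x, hx1, hx2⟩ := hx
      rw [Sym2.mem_iff] at hx1 hx2
      rcases hx2 with rfl | rfl
      · rcases hx1 with h | h <;> exact absurd h (by simp)
      · rcases hx1 with h | h <;> rw [Option.some_inj] at h <;> subst h <;> intro hc
        · exact h1ne (by linear_combination -hc)
        · exact h2ne (by linear_combination -hc)
    · rw [wheelColor_rim h2ne, wheelColor_rim h2ne]
      intro hc
      have hab : a = b := by linear_combination hc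
      exact hef (by rw [hab])
  · -- no rainbow C4
    rintro ⟨f, hinj, hrb⟩
    have h01 : (wheel (n - 1)).Adj (f 0) (f 1) := f.map_adj (by decide)
    have h12 : (wheel (n - 1)).Adj (f 1) (f 2) := f.map_adj (by decide)
    have h23 : (wheel (n - 1)).Adj (f 2) (f 3) := f.map_adj (by decide)
    have h30 : (wheel (n - 1)).Adj (f 3) (f 0) := f.map_adj (by decide)
    have he01 : s((0 : Fin 4), 1) ∈ (cycleGraph 4).edgeSet := by
      rw [SimpleGraph.mem_edgeSet]; decide
    have he12 : s((1 : Fin 4), 2) ∈ (cycleGraph 4).edgeSet := by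
      rw [SimpleGraph.mem_edgeSet]; decide
    have he23 : s((2 : Fin 4), 3) ∈ (cycleGraph 4).edgeSet := by
      rw [SimpleGraph.mem_edgeSet]; decide
    have he30 : s((3 : Fin 4), 0) ∈ (cycleGraph 4).edgeSet := by
      rw [SimpleGraph.mem_edgeSet]; decide
    rcases hv0 : f 0 with _ | a0 <;> rcases hv1 : f 1 with _ | a1 <;>
      rcases hv2 : f 2 with _ | a2 <;> rcases hv3 : f 3 with _ | a3 <;>
      first
      | exact absurd (hinj (hv0.trans hv1.symm)) (by decide)
      | exact absurd (hinj (hv0.trans hv2.symm)) (by decide)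
      | exact absurd (hinj (hv0.trans hv3.symm)) (by decide)
      | exact absurd (hinj (hv1.trans hv2.symm)) (by decide)
      | exact absurd (hinj (hv1.trans hv3.symm)) (by decide)
      | exact absurd (hinj (hv2.trans hv3.symm)) (by decide)
      | skip
    · -- f 0 = none
      rw [hv1, hv2] at h12
      rw [hv2, hv3] at h23
      have hpr : a1 ≠ a3 := fun h =>
        absurd (hinj (by rw [hv1, hv3, h] : f 1 = f 3)) (by decide)
      rcases wheel_aux h2ne (wheel_adj_some h12) (wheel_adj_some h23) hpr with hc | hc
      · exact hrb _ he01 _ he23 (by decide)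
          (by rw [Sym2.map_pair_eq, Sym2.map_pair_eq, hv0, hv1, hv2, hv3]; exact hc)
      · exact hrb _ he12 _ he30 (by decide)
          (by rw [Sym2.map_pair_eq, Sym2.map_pair_eq, hv1, hv2, hv3, hv0]; exact hc)
    · -- f 1 = none
      rw [hv2, hv3] at h23
      rw [hv3, hv0] at h30
      have hpr : a2 ≠ a0 := fun h =>
        absurd (hinj (by rw [hv2, hv0, h] : f 2 = f 0)) (by decide)
      rcases wheel_aux h2ne (wheel_adj_some h23) (wheel_adj_some h30) hpr with hc | hc
      · exact hrb _ he12 _ he30 (by decide)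
          (by rw [Sym2.map_pair_eq, Sym2.map_pair_eq, hv1, hv2, hv3, hv0]; exact hc)
      · exact hrb _ he23 _ he01 (by decide)
          (by rw [Sym2.map_pair_eq, Sym2.map_pair_eq, hv2, hv3, hv0, hv1]; exact hc)
    · -- f 2 = none
      rw [hv3, hv0] at h30
      rw [hv0, hv1] at h01
      have hpr : a3 ≠ a1 := fun h =>
        absurd (hinj (by rw [hv3, hv1, h] : f 3 = f 1)) (by decide)
      rcases wheel_aux h2ne (wheel_adj_some h30) (wheel_adj_some h01) hpr with hc | hc
      · exact hrb _ he23 _ he01 (by decide)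
          (by rw [Sym2.map_pair_eq, Sym2.map_pair_eq, hv2, hv3, hv0, hv1]; exact hc)
      · exact hrb _ he30 _ he12 (by decide)
          (by rw [Sym2.map_pair_eq, Sym2.map_pair_eq, hv3, hv0, hv1, hv2]; exact hc)
    · -- f 3 = none
      rw [hv0, hv1] at h01
      rw [hv1, hv2] at h12
      have hpr : a0 ≠ a2 := fun h =>
        absurd (hinj (by rw [hv0, hv2, h] : f 0 = f 2)) (by decide)
      rcases wheel_aux h2ne (wheel_adj_some h01) (wheel_adj_some h12) hpr with hc | hc
      · exact hrb _ he30 _ he12 (by decide)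
          (by rw [Sym2.map_pair_eq, Sym2.map_pair_eq, hv3, hv0, hv1, hv2]; exact hc)
      · exact hrb _ he01 _ he23 (by decide)
          (by rw [Sym2.map_pair_eq, Sym2.map_pair_eq, hv0, hv1, hv2, hv3]; exact hc)
    · -- all rim
      rw [hv0, hv1] at h01
      rw [hv1, hv2] at h12
      rw [hv2, hv3] at h23
      rw [hv3, hv0] at h30
      have h02 : a0 ≠ a2 := fun h =>
        absurd (hinj (by rw [hv0, hv2, h] : f 0 = f 2)) (by decide)
      have h13 : a1 ≠ a3 := fun h =>
        absurd (hinj (by rw [hv1, hv3, h] : f 1 = f 3)) (by decide)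
      exact no_rim_C4 h2ne h4ne (wheel_adj_some h01) (wheel_adj_some h12)
        (wheel_adj_some h23) (wheel_adj_some h30) h02 h13
end

section
/- Let G_A be the graph on vertex set {w, a, b, c, d, e} with edge set E(G_A) = {wa, wb, wc, wd, we, ab, bc, cd, de, bd}. Then every proper edge coloring of G_A contains a rainbow 4-cycle. -/
open SimpleGraph

/-- The graph `G_A`: `w = 0, a = 1, b = 2, c = 3, d = 4, e = 5`. -/
def GA : SimpleGraph (Fin 6) :=
  SimpleGraph.fromEdgeSet
    {s(0, 1), s(0, 2), s(0, 3), s(0, 4), s(0, 5),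
     s(1, 2), s(2, 3), s(3, 4), s(4, 5), s(2, 4)}


lemma cycle4_edgeSet : (cycleGraph 4).edgeSet = {s(0,1), s(1,2), s(2,3), s(0,3)} := by
  ext e
  induction e using Sym2.ind with
  | _ x y =>
    simp only [SimpleGraph.mem_edgeSet, Set.mem_insert_iff, Set.mem_singleton_iff, Sym2.eq,
      Sym2.rel_iff', Prod.mk.injEq, Prod.swap_prod_mk]
    revert x y; decide

lemma rainbow_of_cycle {α : Type*} (c : Sym2 (Fin 6) → α) (v0 v1 v2 v3 : Fin 6)
    (h01 : GA.Adj v0 v1) (h12 : GA.Adj v1 v2) (h23 : GA.Adj v2 v3) (h30 : GA.Adj v3 v0)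
    (hne02 : v0 ≠ v2) (hne13 : v1 ≠ v3)
    (dA : c s(v0,v1) ≠ c s(v1,v2)) (dB : c s(v0,v1) ≠ c s(v2,v3))
    (dC : c s(v0,v1) ≠ c s(v3,v0)) (dD : c s(v1,v2) ≠ c s(v2,v3))
    (dE : c s(v1,v2) ≠ c s(v3,v0)) (dF : c s(v2,v3) ≠ c s(v3,v0)) :
    HasRainbowCopy (cycleGraph 4) GA c := by
  let v : Fin 4 → Fin 6 := ![v0, v1, v2, v3]
  refine ⟨⟨v, ?_⟩, ?_, ?_⟩
  · intro a b hab
    fin_cases a <;> fin_cases b <;>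
      first
        | exact absurd hab (by decide)
        | exact h01 | exact h01.symm | exact h12 | exact h12.symm
        | exact h23 | exact h23.symm | exact h30 | exact h30.symm
  · intro a b hab
    fin_cases a <;> fin_cases b <;> simp_all [v] <;>
      first
        | rfl
        | exact absurd hab h01.ne | exact absurd hab.symm h01.ne
        | exact absurd hab h12.ne | exact absurd hab.symm h12.ne
        | exact absurd hab h23.ne | exact absurd hab.symm h23.ne
        | exact absurd hab.symm h30.ne | exact absurd hab h30.ne
        | exact absurd hab hne02 | exact absurd hab.symm hne02
        | exact absurd hab hne13 | exact absurd hab.symm hne13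
  · have dC' : c s(v0,v1) ≠ c s(v0,v3) := by rw [Sym2.eq_swap (a := v0) (b := v3)]; exact dC
    have dE' : c s(v1,v2) ≠ c s(v0,v3) := by rw [Sym2.eq_swap (a := v0) (b := v3)]; exact dE
    have dF' : c s(v2,v3) ≠ c s(v0,v3) := by rw [Sym2.eq_swap (a := v0) (b := v3)]; exact dF
    intro e he e' he' hee
    rw [cycle4_edgeSet] at he he'
    simp only [Set.mem_insert_iff, Set.mem_singleton_iff] at he he'
    rcases he with rfl | rfl | rfl | rfl <;> rcases he' with rfl | rfl | rfl | rfl <;>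
      simp only [Sym2.map_pair_eq] <;>
      first
        | exact absurd rfl hee
        | exact dA | exact dA.symm | exact dB | exact dB.symm | exact dC' | exact dC'.symm
        | exact dD | exact dD.symm | exact dE' | exact dE'.symm | exact dF' | exact dF'.symm

lemma hcne {α : Type*} {c : Sym2 (Fin 6) → α} (hc : IsProperEdgeColoring GA c)
    (a b x y z : Fin 6) (h1 : s(a, b) ∈ GA.edgeSet) (h2 : s(x, y) ∈ GA.edgeSet)
    (h3 : s(a, b) ≠ s(x, y)) (hz1 : z ∈ s(a, b)) (hz2 : z ∈ s(x, y)) :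
    c s(a, b) ≠ c s(x, y) :=
  hc _ h1 _ h2 h3 ⟨z, hz1, hz2⟩

lemma m01 : s((0:Fin 6), 1) ∈ GA.edgeSet := by simp [GA]
lemma m10 : s((1:Fin 6), 0) ∈ GA.edgeSet := by simp [GA]
lemma m02 : s((0:Fin 6), 2) ∈ GA.edgeSet := by simp [GA]
lemma m20 : s((2:Fin 6), 0) ∈ GA.edgeSet := by simp [GA]
lemma m03 : s((0:Fin 6), 3) ∈ GA.edgeSet := by simp [GA]
lemma m30 : s((3:Fin 6), 0) ∈ GA.edgeSet := by simp [GA]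
lemma m04 : s((0:Fin 6), 4) ∈ GA.edgeSet := by simp [GA]
lemma m40 : s((4:Fin 6), 0) ∈ GA.edgeSet := by simp [GA]
lemma m05 : s((0:Fin 6), 5) ∈ GA.edgeSet := by simp [GA]
lemma m50 : s((5:Fin 6), 0) ∈ GA.edgeSet := by simp [GA]
lemma m12 : s((1:Fin 6), 2) ∈ GA.edgeSet := by simp [GA]
lemma m21 : s((2:Fin 6), 1) ∈ GA.edgeSet := by simp [GA]
lemma m23 : s((2:Fin 6), 3) ∈ GA.edgeSet := by simp [GA]
lemma m32 : s((3:Fin 6), 2) ∈ GA.edgeSet := by simp [GA]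
lemma m34 : s((3:Fin 6), 4) ∈ GA.edgeSet := by simp [GA]
lemma m43 : s((4:Fin 6), 3) ∈ GA.edgeSet := by simp [GA]
lemma m45 : s((4:Fin 6), 5) ∈ GA.edgeSet := by simp [GA]
lemma m54 : s((5:Fin 6), 4) ∈ GA.edgeSet := by simp [GA]
lemma m24 : s((2:Fin 6), 4) ∈ GA.edgeSet := by simp [GA]
lemma m42 : s((4:Fin 6), 2) ∈ GA.edgeSet := by simp [GA]

lemma sw (a b : Fin 6) : (s(a, b) : Sym2 (Fin 6)) = s(b, a) := Sym2.eq_swap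

set_option maxHeartbeats 1000000 in
theorem stmt12 {α : Type*} (c : Sym2 (Fin 6) → α) (hc : IsProperEdgeColoring GA c) :
    HasRainbowCopy (cycleGraph 4) GA c := by
  have hC : ∀ u v x y z : Fin 6, s(u,v) ∈ GA.edgeSet → s(x,y) ∈ GA.edgeSet →
      s(u,v) ≠ s(x,y) → z ∈ s(u,v) → z ∈ s(x,y) → c s(u,v) ≠ c s(x,y) := fun _ _ _ _ _ => hcne hc _ _ _ _ _
  by_cases hcw : c s(0,3) = c s(2,4)
  · -- W3 = BD
    by_cases hab : c s(1,2) = c s(0,4)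
    · by_cases hde : c s(4,5) = c s(0,2)
      · -- cycle b w d c = (2,0,4,3)
        refine rainbow_of_cycle c 2 0 4 3 m20 m04 m43 m32 (by decide) (by decide) ?_ ?_ ?_ ?_ ?_ ?_
        · exact hC 2 0 0 4 0 m20 m04 (by decide) (by decide) (by decide)
        · rw [sw 2 0, ← hde, sw 4 3]
          exact (hC 3 4 4 5 4 m34 m45 (by decide) (by decide) (by decide)).symm
        · exact hC 2 0 3 2 2 m20 m32 (by decide) (by decide) (by decide)
        · exact hC 0 4 4 3 4 m04 m43 (by decide) (by decide) (by decide)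
        · rw [← hab, sw 3 2]
          exact hC 1 2 2 3 2 m12 m23 (by decide) (by decide) (by decide)
        · exact hC 4 3 3 2 3 m43 m32 (by decide) (by decide) (by decide)
      · -- cycle b w e d = (2,0,5,4)
        refine rainbow_of_cycle c 2 0 5 4 m20 m05 m54 m42 (by decide) (by decide) ?_ ?_ ?_ ?_ ?_ ?_
        · exact hC 2 0 0 5 0 m20 m05 (by decide) (by decide) (by decide)
        · rw [sw 2 0, sw 5 4]; exact fun h => hde h.symm
        · exact hC 2 0 4 2 2 m20 m42 (by decide) (by decide) (by decide)
        · exact hC 0 5 5 4 5 m05 m54 (by decide) (by decide) (by decide)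
        · rw [sw 4 2, ← hcw]
          exact hC 0 5 0 3 0 m05 m03 (by decide) (by decide) (by decide)
        · exact hC 5 4 4 2 4 m54 m42 (by decide) (by decide) (by decide)
    · -- cycle b a w d = (2,1,0,4)
      refine rainbow_of_cycle c 2 1 0 4 m21 m10 m04 m42 (by decide) (by decide) ?_ ?_ ?_ ?_ ?_ ?_
      · exact hC 2 1 1 0 1 m21 m10 (by decide) (by decide) (by decide)
      · rw [sw 2 1]; exact hab
      · exact hC 2 1 4 2 2 m21 m42 (by decide) (by decide) (by decide)
      · exact hC 1 0 0 4 0 m10 m04 (by decide) (by decide) (by decide)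
      · rw [sw 1 0, sw 4 2, ← hcw]
        exact hC 0 1 0 3 0 m01 m03 (by decide) (by decide) (by decide)
      · exact hC 0 4 4 2 4 m04 m42 (by decide) (by decide) (by decide)
  · by_cases hbc : c s(2,3) = c s(0,4)
    · -- BC = W4, W3 ≠ BD
      by_cases hcd : c s(0,2) = c s(3,4)
      · by_cases hbd : c s(0,1) = c s(2,4)
        · -- cycle b w e d = (2,0,5,4)
          refine rainbow_of_cycle c 2 0 5 4 m20 m05 m54 m42 (by decide) (by decide) ?_ ?_ ?_ ?_ ?_ ?_
          · exact hC 2 0 0 5 0 m20 m05 (by decide) (by decide) (by decide)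
          · rw [sw 2 0, hcd, sw 5 4]
            exact hC 3 4 4 5 4 m34 m45 (by decide) (by decide) (by decide)
          · exact hC 2 0 4 2 2 m20 m42 (by decide) (by decide) (by decide)
          · exact hC 0 5 5 4 5 m05 m54 (by decide) (by decide) (by decide)
          · rw [sw 4 2, ← hbd]
            exact hC 0 5 0 1 0 m05 m01 (by decide) (by decide) (by decide)
          · exact hC 5 4 4 2 4 m54 m42 (by decide) (by decide) (by decide)
        · -- cycle b a w d = (2,1,0,4)
          refine rainbow_of_cycle c 2 1 0 4 m21 m10 m04 m42 (by decide) (by decide) ?_ ?_ ?_ ?_ ?_ ?_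
          · exact hC 2 1 1 0 1 m21 m10 (by decide) (by decide) (by decide)
          · rw [sw 2 1, ← hbc]
            exact hC 1 2 2 3 2 m12 m23 (by decide) (by decide) (by decide)
          · exact hC 2 1 4 2 2 m21 m42 (by decide) (by decide) (by decide)
          · exact hC 1 0 0 4 0 m10 m04 (by decide) (by decide) (by decide)
          · rw [sw 1 0, sw 4 2]; exact hbd
          · exact hC 0 4 4 2 4 m04 m42 (by decide) (by decide) (by decide)
      · -- cycle b w c d = (2,0,3,4)
        refine rainbow_of_cycle c 2 0 3 4 m20 m03 m34 m42 (by decide) (by decide) ?_ ?_ ?_ ?_ ?_ ?_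
        · exact hC 2 0 0 3 0 m20 m03 (by decide) (by decide) (by decide)
        · rw [sw 2 0]; exact hcd
        · exact hC 2 0 4 2 2 m20 m42 (by decide) (by decide) (by decide)
        · exact hC 0 3 3 4 3 m03 m34 (by decide) (by decide) (by decide)
        · rw [sw 4 2]; exact hcw
        · exact hC 3 4 4 2 4 m34 m42 (by decide) (by decide) (by decide)
    · -- cycle b c w d = (2,3,0,4)
      refine rainbow_of_cycle c 2 3 0 4 m23 m30 m04 m42 (by decide) (by decide) ?_ ?_ ?_ ?_ ?_ ?_
      · exact hC 2 3 3 0 3 m23 m30 (by decide) (by decide) (by decide)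
      · exact hbc
      · exact hC 2 3 4 2 2 m23 m42 (by decide) (by decide) (by decide)
      · exact hC 3 0 0 4 0 m30 m04 (by decide) (by decide) (by decide)
      · rw [sw 3 0, sw 4 2]; exact hcw
      · exact hC 0 4 4 2 4 m04 m42 (by decide) (by decide) (by decide)
end

section
/- Let G_B be the graph with vertex set {w, a, b, c, d, e, f} and edge set {wa, wb, wc, wd, we, wf, ab, bc, de, ef, be}. Then every proper edge coloring of G_B contains a rainbow 4-cycle. -/
open SimpleGraph

/-- The graph `G_B`: `w = 0, a = 1, b = 2, c = 3, d = 4, e = 5, f = 6`. -/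
def GB : SimpleGraph (Fin 7) :=
  SimpleGraph.fromEdgeSet
    {s(0, 1), s(0, 2), s(0, 3), s(0, 4), s(0, 5), s(0, 6),
     s(1, 2), s(2, 3), s(4, 5), s(5, 6), s(2, 5)}
lemma mk_copy {α : Type*} (c : Sym2 (Fin 7) → α) (v0 v1 v2 v3 : Fin 7)
    (hom : ∀ i j : Fin 4, (cycleGraph 4).Adj i j →
      GB.Adj (![v0,v1,v2,v3] i) (![v0,v1,v2,v3] j))
    (hinj : Function.Injective ![v0,v1,v2,v3])
    (g1 : c s(v0, v1) ≠ c s(v1, v2))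
    (g2 : c s(v0, v1) ≠ c s(v2, v3))
    (g3 : c s(v0, v1) ≠ c s(v0, v3))
    (g4 : c s(v1, v2) ≠ c s(v2, v3))
    (g5 : c s(v1, v2) ≠ c s(v0, v3))
    (g6 : c s(v2, v3) ≠ c s(v0, v3)) :
    HasRainbowCopy (cycleGraph 4) GB c := by
  refine ⟨⟨![v0,v1,v2,v3], fun {i j} h => hom i j h⟩, hinj, ?_⟩
  intro e he e' he' hne
  rw [cycle4_edgeSet] at he he'
  simp only [Set.mem_insert_iff, Set.mem_singleton_iff] at he he'
  rcases he with rfl|rfl|rfl|rfl <;> rcases he' with rfl|rfl|rfl|rfl <;>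
    simp only [Sym2.map_pair_eq, Matrix.cons_val_zero, Matrix.cons_val_one,
      Matrix.head_cons, Matrix.cons_val_two, Matrix.tail_cons, Matrix.cons_val_three] <;>
    first
      | exact absurd rfl hne
      | exact g1 | exact g2 | exact g3 | exact g4 | exact g5 | exact g6
      | exact g1.symm | exact g2.symm | exact g3.symm | exact g4.symm
      | exact g5.symm | exact g6.symm

lemma gb_hom (v0 v1 v2 v3 : Fin 7) (h01 : GB.Adj v0 v1) (h12 : GB.Adj v1 v2)
    (h23 : GB.Adj v2 v3) (h30 : GB.Adj v3 v0) :
    ∀ i j : Fin 4, (cycleGraph 4).Adj i j →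
      GB.Adj (![v0,v1,v2,v3] i) (![v0,v1,v2,v3] j) := by
  intro i j hij
  fin_cases i <;> fin_cases j <;>
    simp only [Matrix.cons_val_zero, Matrix.cons_val_one, Matrix.head_cons,
      Matrix.cons_val_two, Matrix.tail_cons, Matrix.cons_val_three, Fin.mk_zero,
      Fin.mk_one] <;>
    first
      | exact h01 | exact h01.symm | exact h12 | exact h12.symm
      | exact h23 | exact h23.symm | exact h30 | exact h30.symm
      | (exfalso; revert hij; decide)

theorem stmt13 {α : Type*} (c : Sym2 (Fin 7) → α) (hc : IsProperEdgeColoring GB c) :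
    HasRainbowCopy (cycleGraph 4) GB c := by
  have H : ∀ x y u v : Fin 7, GB.Adj x y → GB.Adj u v → s(x,y) ≠ s(u,v) →
      (∃ p : Fin 7, p ∈ s(x,y) ∧ p ∈ s(u,v)) → c s(x,y) ≠ c s(u,v) := by
    intro x y u v h1 h2
    exact hc _ ((SimpleGraph.mem_edgeSet GB).mpr h1) _ ((SimpleGraph.mem_edgeSet GB).mpr h2)
  have a01 : GB.Adj 0 1 := by simp [GB]
  have a02 : GB.Adj 0 2 := by simp [GB]
  have a03 : GB.Adj 0 3 := by simp [GB]
  have a04 : GB.Adj 0 4 := by simp [GB]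
  have a05 : GB.Adj 0 5 := by simp [GB]
  have a06 : GB.Adj 0 6 := by simp [GB]
  have a12 : GB.Adj 1 2 := by simp [GB]
  have a23 : GB.Adj 2 3 := by simp [GB]
  have a45 : GB.Adj 4 5 := by simp [GB]
  have a56 : GB.Adj 5 6 := by simp [GB]
  have a25 : GB.Adj 2 5 := by simp [GB]
  by_contra hcon
  -- cycle b c w e : 2 3 0 5
  have d1 : c s(2,3) = c s(0,5) ∨ c s(3,0) = c s(2,5) := by
    by_contra h
    push_neg at h
    exact hcon (mk_copy c 2 3 0 5
      (gb_hom 2 3 0 5 a23 a03.symm a05 a25.symm)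
      (by decide)
      (H 2 3 3 0 a23 a03.symm (by decide) ⟨3, by decide, by decide⟩)
      h.1
      (H 2 3 2 5 a23 a25 (by decide) ⟨2, by decide, by decide⟩)
      (H 3 0 0 5 a03.symm a05 (by decide) ⟨0, by decide, by decide⟩)
      h.2
      (H 0 5 2 5 a05 a25 (by decide) ⟨5, by decide, by decide⟩))
  -- cycle b a w e : 2 1 0 5
  have d3 : c s(2,1) = c s(0,5) ∨ c s(1,0) = c s(2,5) := by
    by_contra h
    push_neg at h
    exact hcon (mk_copy c 2 1 0 5
      (gb_hom 2 1 0 5 a12.symm a01.symm a05 a25.symm)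
      (by decide)
      (H 2 1 1 0 a12.symm a01.symm (by decide) ⟨1, by decide, by decide⟩)
      h.1
      (H 2 1 2 5 a12.symm a25 (by decide) ⟨2, by decide, by decide⟩)
      (H 1 0 0 5 a01.symm a05 (by decide) ⟨0, by decide, by decide⟩)
      h.2
      (H 0 5 2 5 a05 a25 (by decide) ⟨5, by decide, by decide⟩))
  -- cycle b w d e : 2 0 4 5
  have d2 : c s(2,0) = c s(4,5) ∨ c s(0,4) = c s(2,5) := by
    by_contra h
    push_neg at h
    exact hcon (mk_copy c 2 0 4 5
      (gb_hom 2 0 4 5 a02.symm a04 a45 a25.symm)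
      (by decide)
      (H 2 0 0 4 a02.symm a04 (by decide) ⟨0, by decide, by decide⟩)
      h.1
      (H 2 0 2 5 a02.symm a25 (by decide) ⟨2, by decide, by decide⟩)
      (H 0 4 4 5 a04 a45 (by decide) ⟨4, by decide, by decide⟩)
      h.2
      (H 4 5 2 5 a45 a25 (by decide) ⟨5, by decide, by decide⟩))
  -- cycle b w f e : 2 0 6 5
  have d4 : c s(2,0) = c s(6,5) ∨ c s(0,6) = c s(2,5) := by
    by_contra h
    push_neg at h
    exact hcon (mk_copy c 2 0 6 5
      (gb_hom 2 0 6 5 a02.symm a06 a56.symm a25.symm)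
      (by decide)
      (H 2 0 0 6 a02.symm a06 (by decide) ⟨0, by decide, by decide⟩)
      h.1
      (H 2 0 2 5 a02.symm a25 (by decide) ⟨2, by decide, by decide⟩)
      (H 0 6 6 5 a06 a56.symm (by decide) ⟨6, by decide, by decide⟩)
      h.2
      (H 6 5 2 5 a56.symm a25 (by decide) ⟨5, by decide, by decide⟩))
  have n1 : c s(2,3) ≠ c s(2,1) := H 2 3 2 1 a23 a12.symm (by decide) ⟨2, by decide, by decide⟩
  have n2 : c s(3,0) ≠ c s(1,0) := H 3 0 1 0 a03.symm a01.symm (by decide) ⟨0, by decide, by decide⟩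
  have n3 : c s(4,5) ≠ c s(6,5) := H 4 5 6 5 a45 a56.symm (by decide) ⟨5, by decide, by decide⟩
  have n4 : c s(0,4) ≠ c s(0,6) := H 0 4 0 6 a04 a06 (by decide) ⟨0, by decide, by decide⟩
  have n5 : c s(3,0) ≠ c s(0,4) := H 3 0 0 4 a03.symm a04 (by decide) ⟨0, by decide, by decide⟩
  have n6 : c s(3,0) ≠ c s(0,6) := H 3 0 0 6 a03.symm a06 (by decide) ⟨0, by decide, by decide⟩
  have n7 : c s(1,0) ≠ c s(0,4) := H 1 0 0 4 a01.symm a04 (by decide) ⟨0, by decide, by decide⟩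
  have n8 : c s(1,0) ≠ c s(0,6) := H 1 0 0 6 a01.symm a06 (by decide) ⟨0, by decide, by decide⟩
  rcases d1 with h1|h1 <;> rcases d2 with h2|h2 <;> rcases d3 with h3|h3 <;> rcases d4 with h4|h4 <;>
    first
      | exact n1 (h1.trans h3.symm)
      | exact n3 (h2.symm.trans h4)
      | exact n2 (h1.trans h3.symm)
      | exact n4 (h2.trans h4.symm)
      | exact n5 (h1.trans h2.symm)
      | exact n6 (h1.trans h4.symm)
      | exact n7 (h3.trans h2.symm)
      | exact n8 (h3.trans h4.symm)
end

section
/- For n ≥ 4, every rainbow C_4-saturated graph on n vertices has at most one vertex of degree 1, and hence has at least (n−1)/2 + (n−1)/2 edges, giving sat*(n, C_4) ≥ n − 3/2. -/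
open SimpleGraph

/-!
If `x, y` are nonadjacent in a rainbow-`C₄`-saturated graph `G`, extend a good colouring of
`G` by giving `xy` a colour unused at `x` and `y`. The rainbow `C₄` that must appear uses `xy`,
so `G` contains a path `x – p – q – y` with `c(pq)` different from the colour of `xy`. With a
fresh colour this gives minimum degree at least one, and it rules out two leaves `v, w`: if they
are adjacent, `vw` is an isolated edge and a third vertex cannot be reached; otherwise their
neighbours `v' ≠ w'` must be adjacent, and then colouring `vw` like `v'w'` leaves no rainbow
`C₄`. With at most one leaf, the handshake lemma gives `2|E| ≥ 2n - 1`.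
-/

section AddEdge

variable {V : Type*} {G : SimpleGraph V} {x y a b : V}

lemma addEdge_adj : (addEdge G x y).Adj a b ↔ G.Adj a b ∨ (s(a, b) = s(x, y) ∧ a ≠ b) := by
  simp [addEdge, fromEdgeSet_adj]

lemma le_addEdge : G ≤ addEdge G x y := le_sup_left

lemma adj_of_addEdge_adj (h : (addEdge G x y).Adj a b) (hx : a ≠ x) (hy : a ≠ y) :
    G.Adj a b := by
  refine (addEdge_adj.1 h).resolve_right fun ⟨hab, _⟩ ↦ ?_
  rcases Sym2.eq_iff.1 hab with ⟨rfl, -⟩ | ⟨rfl, -⟩ <;> contradiction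

lemma mem_edgeSet_addEdge {e : Sym2 V} (hxy : x ≠ y) :
    e ∈ (addEdge G x y).edgeSet ↔ e = s(x, y) ∨ e ∈ G.edgeSet := by
  have : ¬ s(x, y).IsDiag := by simpa using hxy
  simp only [addEdge, edgeSet_sup, edgeSet_fromEdgeSet, Set.mem_union, Set.mem_sdiff,
    Set.mem_singleton_iff]
  constructor
  · rintro (h | ⟨rfl, -⟩) <;> tauto
  · rintro (rfl | h)
    exacts [.inr ⟨rfl, this⟩, .inl h]

end AddEdge

namespace SimpleGraph

lemma cycleGraph_four_exists_path : ∀ u v : Fin 4, (cycleGraph 4).Adj u v →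
    ∃ u' v', (cycleGraph 4).Adj u u' ∧ (cycleGraph 4).Adj u' v' ∧ (cycleGraph 4).Adj v' v ∧
      u' ≠ v ∧ v' ≠ u ∧ s(u', v') ≠ s(u, v) := by
  decide

section Leaf

variable {V : Type*} {G : SimpleGraph V} {v v' : V}

lemma adj_iff_of_neighborSet_eq_singleton (hv : G.neighborSet v = {v'}) {z : V} :
    G.Adj v z ↔ z = v' := by
  rw [← mem_neighborSet, hv, Set.mem_singleton_iff]

lemma eq_of_mem_edgeSet_of_neighborSet_eq_singleton (hv : G.neighborSet v = {v'})
    {e : Sym2 V} (he : e ∈ G.edgeSet) (hve : v ∈ e) : e = s(v, v') := by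
  obtain ⟨b, rfl⟩ := Sym2.mem_iff_exists.1 hve
  rw [(adj_iff_of_neighborSet_eq_singleton hv).1 (G.mem_edgeSet.1 he)]

end Leaf

section Counting

open Finset

variable {V : Type*} [Fintype V] {G : SimpleGraph V} [DecidableRel G.Adj]

lemma ncard_neighborSet (v : V) : (G.neighborSet v).ncard = G.degree v := by
  rw [Set.ncard_eq_toFinset_card', Set.toFinset_card, card_neighborSet_eq_degree]

lemma card_le_card_edgeFinset_of_degree_pos (hpos : ∀ v, 0 < G.degree v)
    (hleaves : {v | G.degree v = 1}.Subsingleton) : Fintype.card V ≤ #G.edgeFinset := by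
  have hsum : 2 * Fintype.card V ≤ ∑ v, G.degree v + #{v | G.degree v = 1} :=
    calc 2 * Fintype.card V = ∑ _v : V, 2 := by simp [mul_comm]
      _ ≤ ∑ v, (G.degree v + if G.degree v = 1 then 1 else 0) :=
        sum_le_sum fun v _ ↦ by have := hpos v; split_ifs <;> omega
      _ = ∑ v, G.degree v + #{v | G.degree v = 1} := by
        rw [sum_add_distrib, sum_boole, Nat.cast_id]
  have hone : #{v | G.degree v = 1} ≤ 1 :=
    card_le_one.2 fun a ha b hb ↦ hleaves (mem_filter.1 ha).2 (mem_filter.1 hb).2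
  rw [sum_degrees_eq_twice_card_edges] at hsum
  omega

end Counting

end SimpleGraph

section RainbowCycle

variable {V α : Type*} [DecidableEq V] {G : SimpleGraph V} {x y : V}

lemma exists_path_of_hasRainbowCopy_addEdge {c : Sym2 V → α} {k : α}
    (hc : ¬ HasRainbowCopy (cycleGraph 4) G c)
    (h : HasRainbowCopy (cycleGraph 4) (addEdge G x y) (Function.update c s(x, y) k)) :
    ∃ p q, G.Adj x p ∧ G.Adj p q ∧ G.Adj q y ∧ x ≠ q ∧ p ≠ y ∧ c s(p, q) ≠ k := by
  obtain ⟨⟨f, hadj⟩, hf, hrainbow⟩ := h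
  simp only [RelHom.coeFn_mk] at hf hrainbow
  by_cases huses : ∃ u v, (cycleGraph 4).Adj u v ∧ f u = x ∧ f v = y
  · obtain ⟨u, v, huv, rfl, rfl⟩ := huses
    obtain ⟨u', v', huu', hu'v', hv'v, hu'v, hv'u, hne⟩ := cycleGraph_four_exists_path u v huv
    have hpx : f u' ≠ f u := hf.ne huu'.ne'
    have hpy : f u' ≠ f v := hf.ne hu'v
    have hqx : f v' ≠ f u := hf.ne hv'u
    have hqy : f v' ≠ f v := hf.ne hv'v.ne
    refine ⟨f u', f v', (adj_of_addEdge_adj (hadj huu'.symm) hpx hpy).symm,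
      adj_of_addEdge_adj (hadj hu'v') hpx hpy, adj_of_addEdge_adj (hadj hv'v) hqx hqy,
      hqx.symm, hpy, ?_⟩
    have hcolor := hrainbow _ hu'v' _ huv hne
    rwa [Sym2.map_mk, Sym2.map_mk, Function.update_self, Function.update_of_ne] at hcolor
    rintro h
    rcases Sym2.eq_iff.1 h with ⟨h, -⟩ | ⟨h, -⟩
    exacts [hpx h, hpy h]
  · have hne : ∀ a b, (cycleGraph 4).Adj a b → s(f a, f b) ≠ s(x, y) := by
      rintro a b hab h
      rcases Sym2.eq_iff.1 h with ⟨ha, hb⟩ | ⟨ha, hb⟩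
      exacts [huses ⟨a, b, hab, ha, hb⟩, huses ⟨b, a, hab.symm, hb, ha⟩]
    refine (hc ⟨⟨f, fun hab ↦ (addEdge_adj.1 (hadj hab)).resolve_right
      fun h ↦ hne _ _ hab h.1⟩, hf, ?_⟩).elim
    intro e he e' he' hee'
    induction e with | _ a b => induction e' with | _ a' b' =>
    have hcolor := hrainbow _ he _ he' hee'
    rwa [Sym2.map_mk, Sym2.map_mk, Function.update_of_ne (hne _ _ he),
      Function.update_of_ne (hne _ _ he')] at hcolor

lemma IsProperEdgeColoring.update_addEdge {c : Sym2 V → α} (hc : IsProperEdgeColoring G c)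
    (hxy : x ≠ y) (hna : ¬ G.Adj x y) {k : α}
    (hk : ∀ e ∈ G.edgeSet, x ∈ e ∨ y ∈ e → c e ≠ k) :
    IsProperEdgeColoring (addEdge G x y) (Function.update c s(x, y) k) := by
  have hold : ∀ e ∈ G.edgeSet, e ≠ s(x, y) := fun e he h ↦ hna (G.mem_edgeSet.1 (h ▸ he))
  rintro e he f hf hef ⟨z, hze, hzf⟩
  rw [mem_edgeSet_addEdge hxy] at he hf
  rcases he with rfl | he <;> rcases hf with rfl | hf
  · exact absurd rfl hef
  · rw [Function.update_self, Function.update_of_ne (hold f hf)]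
    rcases Sym2.mem_iff.1 hze with rfl | rfl
    exacts [(hk f hf (.inl hzf)).symm, (hk f hf (.inr hzf)).symm]
  · rw [Function.update_self, Function.update_of_ne (hold e he)]
    rcases Sym2.mem_iff.1 hzf with rfl | rfl
    exacts [hk e he (.inl hze), hk e he (.inr hze)]
  · rw [Function.update_of_ne (hold e he), Function.update_of_ne (hold f hf)]
    exact hc e he f hf hef ⟨z, hze, hzf⟩

lemma RainbowSaturated.exists_path_of_isProperEdgeColoring
    (hG : RainbowSaturated G (cycleGraph 4)) {c : Sym2 V → ℕ} (hc : IsProperEdgeColoring G c)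
    (hrc : ¬ HasRainbowCopy (cycleGraph 4) G c) (hxy : x ≠ y) (hna : ¬ G.Adj x y) {k : ℕ}
    (hk : ∀ e ∈ G.edgeSet, x ∈ e ∨ y ∈ e → c e ≠ k) :
    ∃ p q, G.Adj x p ∧ G.Adj p q ∧ G.Adj q y ∧ x ≠ q ∧ p ≠ y ∧ c s(p, q) ≠ k :=
  exists_path_of_hasRainbowCopy_addEdge hrc (hG.2 x y hxy hna _ (hc.update_addEdge hxy hna hk))

end RainbowCycle

lemma exists_rainbowSaturated {V W : Type*} [Finite V] {H : SimpleGraph W} (hH : H ≠ ⊥) :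
    ∃ G : SimpleGraph V, RainbowSaturated G H := by
  obtain ⟨a, b, hab⟩ := ne_bot_iff_exists_adj.1 hH
  let S := {G : SimpleGraph V |
    ∃ c : Sym2 V → ℕ, IsProperEdgeColoring G c ∧ ¬ HasRainbowCopy H G c}
  have hbot : ⊥ ∈ S :=
    ⟨fun _ ↦ 0, by simp [IsProperEdgeColoring], fun ⟨f, _⟩ ↦ f.map_adj hab⟩
  obtain ⟨G, hG⟩ := S.toFinite.exists_maximal ⟨⊥, hbot⟩
  refine ⟨G, hG.prop, fun x y hxy hna c hc ↦ by_contra fun hrc ↦ hna ?_⟩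
  rw [hG.eq_of_le ⟨c, hc, hrc⟩ le_addEdge]
  exact addEdge_adj.2 (.inr ⟨rfl, hxy⟩)

namespace RainbowSaturated

variable {V : Type*} {G : SimpleGraph V} {v w v' w' : V}

lemma exists_path [Finite V] {x y : V} (hG : RainbowSaturated G (cycleGraph 4)) (hxy : x ≠ y)
    (hna : ¬ G.Adj x y) :
    ∃ p q, G.Adj x p ∧ G.Adj p q ∧ G.Adj q y ∧ x ≠ q ∧ p ≠ y := by
  classical
  obtain ⟨c, hc, hrc⟩ := hG.1
  obtain ⟨k, hk⟩ := (Set.range c).toFinite.exists_notMem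
  obtain ⟨p, q, hxp, hpq, hqy, hxq, hpy, -⟩ :=
    hG.exists_path_of_isProperEdgeColoring hc hrc hxy hna fun e _ _ h ↦ hk ⟨e, h⟩
  exact ⟨p, q, hxp, hpq, hqy, hxq, hpy⟩

lemma neighborSet_nonempty [Finite V] [Nontrivial V] (hG : RainbowSaturated G (cycleGraph 4))
    (v : V) : (G.neighborSet v).Nonempty := by
  obtain ⟨u, hu⟩ := exists_ne v
  by_cases hvu : G.Adj v u
  · exact ⟨u, hvu⟩
  · obtain ⟨p, -, hvp, -⟩ := hG.exists_path hu.symm hvu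
    exact ⟨p, hvp⟩

lemma not_adj_of_neighborSet_eq_singleton [DecidableEq V]
    (hG : RainbowSaturated G (cycleGraph 4)) (hvw : v ≠ w) (hna : ¬ G.Adj v w)
    (hv : G.neighborSet v = {v'}) (hw : G.neighborSet w = {w'}) : ¬ G.Adj v' w' := by
  intro hv'w'
  have hvv' : G.Adj v v' := (adj_iff_of_neighborSet_eq_singleton hv).2 rfl
  have hww' : G.Adj w w' := (adj_iff_of_neighborSet_eq_singleton hw).2 rfl
  obtain ⟨c, hc, hrc⟩ := hG.1
  have hk : ∀ e ∈ G.edgeSet, v ∈ e ∨ w ∈ e → c e ≠ c s(v', w') := by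
    rintro e he (hve | hwe)
    · rw [eq_of_mem_edgeSet_of_neighborSet_eq_singleton hv he hve]
      refine hc _ hvv' _ hv'w' (fun h ↦ ?_) ⟨v', by simp, by simp⟩
      rcases Sym2.eq_iff.1 h with ⟨rfl, -⟩ | ⟨rfl, -⟩
      exacts [G.irrefl hvv', hna hww'.symm]
    · rw [eq_of_mem_edgeSet_of_neighborSet_eq_singleton hw he hwe]
      refine hc _ hww' _ hv'w' (fun h ↦ ?_) ⟨w', by simp, by simp⟩
      rcases Sym2.eq_iff.1 h with ⟨rfl, -⟩ | ⟨rfl, -⟩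
      exacts [hna hvv', G.irrefl hww']
  obtain ⟨p, q, hvp, -, hqw, -, -, hpq⟩ :=
    hG.exists_path_of_isProperEdgeColoring hc hrc hvw hna hk
  obtain rfl := (adj_iff_of_neighborSet_eq_singleton hv).1 hvp
  obtain rfl := (adj_iff_of_neighborSet_eq_singleton hw).1 hqw.symm
  exact hpq rfl

lemma eq_of_neighborSet_eq_singleton [Finite V] (hG : RainbowSaturated G (cycleGraph 4))
    (hV : 3 ≤ ENat.card V) (hv : G.neighborSet v = {v'}) (hw : G.neighborSet w = {w'}) :
    v = w := by
  classical
  by_contra hvw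
  by_cases hadj : G.Adj v w
  · obtain rfl := (adj_iff_of_neighborSet_eq_singleton hv).1 hadj
    obtain rfl := (adj_iff_of_neighborSet_eq_singleton hw).1 hadj.symm
    obtain ⟨u, huv, huw⟩ := ENat.exists_ne_ne_of_three_le hV v w
    have hvu : ¬ G.Adj v u := fun h ↦ huw ((adj_iff_of_neighborSet_eq_singleton hv).1 h)
    obtain ⟨p, q, hvp, hpq, -, hvq, -⟩ := hG.exists_path huv.symm hvu
    obtain rfl := (adj_iff_of_neighborSet_eq_singleton hv).1 hvp
    exact hvq ((adj_iff_of_neighborSet_eq_singleton hw).1 hpq).symm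
  · obtain ⟨p, q, hvp, hpq, hqw, -⟩ := hG.exists_path hvw hadj
    obtain rfl := (adj_iff_of_neighborSet_eq_singleton hv).1 hvp
    obtain rfl := (adj_iff_of_neighborSet_eq_singleton hw).1 hqw.symm
    exact hG.not_adj_of_neighborSet_eq_singleton hvw hadj hv hw hpq

lemma subsingleton_leaves [Finite V] (hG : RainbowSaturated G (cycleGraph 4))
    (hV : 3 ≤ ENat.card V) : {v | (G.neighborSet v).ncard = 1}.Subsingleton := by
  rintro v hv w hw
  obtain ⟨v', hv'⟩ := Set.ncard_eq_one.1 hv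
  obtain ⟨w', hw'⟩ := Set.ncard_eq_one.1 hw
  exact hG.eq_of_neighborSet_eq_singleton hV hv' hw'

lemma card_le_ncard_edgeSet [Fintype V] (hG : RainbowSaturated G (cycleGraph 4))
    (hV : 3 ≤ ENat.card V) : Fintype.card V ≤ G.edgeSet.ncard := by
  classical
  have : Nontrivial V := (ENat.one_lt_card_iff_nontrivial V).1 (lt_of_lt_of_le (by norm_num) hV)
  rw [← coe_edgeFinset, Set.ncard_coe_finset]
  refine card_le_card_edgeFinset_of_degree_pos (fun v ↦ ?_) ?_
  · exact G.degree_pos_iff_exists_adj v |>.2 (hG.neighborSet_nonempty v)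
  · simpa only [ncard_neighborSet] using hG.subsingleton_leaves hV

end RainbowSaturated

theorem stmt15 (n : ℕ) (hn : 4 ≤ n) :
    (∀ G : SimpleGraph (Fin n), RainbowSaturated G (cycleGraph 4) →
      {v : Fin n | (G.neighborSet v).ncard = 1}.ncard ≤ 1 ∧
      ((n : ℝ) - 1) / 2 + ((n : ℝ) - 1) / 2 ≤ (G.edgeSet.ncard : ℝ)) ∧
    (n : ℝ) - 3 / 2 ≤ (rainbowSatNum n (cycleGraph 4) : ℝ) := by
  have hV : 3 ≤ ENat.card (Fin n) := by
    simp only [ENat.card_eq_coe_fintype_card, Fintype.card_fin, Nat.ofNat_le_cast]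
    omega
  have hedges : ∀ G : SimpleGraph (Fin n), RainbowSaturated G (cycleGraph 4) →
      (n : ℝ) ≤ G.edgeSet.ncard := fun G hG ↦ by
    exact_mod_cast (by simpa using hG.card_le_ncard_edgeSet hV)
  refine ⟨fun G hG ↦ ⟨Set.ncard_le_one_iff_subsingleton.2 (hG.subsingleton_leaves hV),
    by linarith [hedges G hG]⟩, ?_⟩
  obtain ⟨G₀, hG₀⟩ := exists_rainbowSaturated (V := Fin n) (H := cycleGraph 4)
    (ne_bot_iff_exists_adj.2 ⟨0, 1, by decide⟩)
  obtain ⟨G, hG, hcard⟩ := Nat.sInf_mem (⟨_, G₀, hG₀, rfl⟩ :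
    {m | ∃ G : SimpleGraph (Fin n),
      RainbowSaturated G (cycleGraph 4) ∧ G.edgeSet.ncard = m}.Nonempty)
  rw [rainbowSatNum, ← hcard]
  linarith [hedges G hG]
end
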